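/- arXiv:1801.00196 — 6 statements merged into one kernel-verified Lean document; each statement's English description precedes it below -/
import Mathlib

section
/- Let (Z_t)_{t≥0} be a martingale with respect to a filtration (F_t)_{t≥0} with square-integrable increments, and suppose there is a constant M > 0 such that Z_{t+1} − Z_t ≤ M almost surely for all t. Let V_t = Σ_{i=1}^t Var(Z_i | F_{i−1}). Then for all z, v > 0, Pr[∃ t ≥ 1 : Z_t ≥ Z_0 + z and V_t ≤ v] ≤ exp(−z² / (2(v + Mz))). -/
/-!
For `0 ≤ λ` with `λ M < 3` put `ψ = bernsteinConst (λ M)`. Summing the exponential series against a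
geometric one gives `exp u ≤ 1 + u + ψ u²` for all `u ≤ λ M`; taking conditional expectations, the
linear term vanishes for martingale increments, so `exp (λ (Z t - Z 0) - ψ λ² V t)` is a nonnegative
supermartingale started at `1`. On the event in question it reaches `exp (λ z - ψ λ² v)`, so Ville's
maximal inequality bounds the probability by `exp (-(λ z - ψ λ² v))`, and `λ = z / (v + M z)` makes
this exponent at least `z² / (2 (v + M z))`.
-/

open MeasureTheory Finset
open scoped Nat

noncomputable def bernsteinConst (y : ℝ) : ℝ := (2 * (1 - y / 3))⁻¹

lemma half_le_bernsteinConst {y : ℝ} (hy0 : 0 ≤ y) (hy3 : y < 3) : 1 / 2 ≤ bernsteinConst y := by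
  rw [bernsteinConst, one_div]
  exact inv_anti₀ (by linarith) (by linarith)

lemma bernsteinConst_mono {x y : ℝ} (hxy : x ≤ y) (hy3 : y < 3) :
    bernsteinConst x ≤ bernsteinConst y :=
  inv_anti₀ (by linarith) (by linarith)

lemma Real.exp_le_one_add_add_sq_div_two_of_nonpos {u : ℝ} (hu : u ≤ 0) :
    Real.exp u ≤ 1 + u + u ^ 2 / 2 := by
  let f : ℝ → ℝ := fun x => 1 + x + x ^ 2 / 2 - Real.exp x
  have hf (x : ℝ) : HasDerivAt f (1 + x - Real.exp x) x :=
    ((((hasDerivAt_id x).const_add 1).add ((hasDerivAt_pow 2 x).div_const 2)).sub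
      (Real.hasDerivAt_exp x)).congr_deriv (by norm_num)
  have hanti : Antitone f := antitone_of_deriv_nonpos (fun x => (hf x).differentiableAt)
    fun x => by rw [(hf x).deriv]; linarith [Real.add_one_le_exp x]
  have := hanti hu
  simp only [f, Real.exp_zero] at this
  linarith

lemma Real.exp_le_one_add_add_bernsteinConst_mul_sq_of_nonneg {u : ℝ} (hu0 : 0 ≤ u) (hu3 : u < 3) :
    Real.exp u ≤ 1 + u + bernsteinConst u * u ^ 2 := by
  have hsum := Real.summable_pow_div_factorial u
  have hgeo : Summable fun n : ℕ => u ^ 2 / 2 * (u / 3) ^ n :=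
    (summable_geometric_of_lt_one (by positivity) (by linarith)).mul_left _
  have hterm (n : ℕ) : u ^ (n + 2) / (n + 2)! ≤ u ^ 2 / 2 * (u / 3) ^ n := by
    have hfac : (2 * 3 ^ n : ℝ) ≤ (n + 2)! := by
      rw [add_comm n]; exact_mod_cast Nat.factorial_mul_pow_le_factorial (m := 2) (n := n)
    calc u ^ (n + 2) / (n + 2)! ≤ u ^ (n + 2) / (2 * 3 ^ n) :=
          div_le_div_of_nonneg_left (by positivity) (by positivity) hfac
      _ = u ^ 2 / 2 * (u / 3) ^ n := by rw [div_pow]; field_simp; ring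
  calc Real.exp u = 1 + u + ∑' n : ℕ, u ^ (n + 2) / (n + 2)! := by
        rw [Real.exp_eq_exp_ℝ, NormedSpace.exp_eq_tsum_div]
        beta_reduce
        rw [← hsum.sum_add_tsum_nat_add 2]
        norm_num [Finset.sum_range_succ]
    _ ≤ 1 + u + ∑' n : ℕ, u ^ 2 / 2 * (u / 3) ^ n := by
        gcongr 1 + u + ?_
        exact ((summable_nat_add_iff 2).2 hsum).tsum_le_tsum hterm hgeo
    _ = 1 + u + bernsteinConst u * u ^ 2 := by
        rw [tsum_mul_left, tsum_geometric_of_lt_one (by positivity) (by linarith), bernsteinConst,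
          mul_inv]
        ring

lemma Real.exp_le_one_add_add_bernsteinConst_mul_sq {u y : ℝ} (hy0 : 0 ≤ y) (hy3 : y < 3)
    (hu : u ≤ y) : Real.exp u ≤ 1 + u + bernsteinConst y * u ^ 2 := by
  rcases le_or_gt u 0 with hu0 | hu0
  · calc Real.exp u ≤ 1 + u + 1 / 2 * u ^ 2 := by
          linarith [Real.exp_le_one_add_add_sq_div_two_of_nonpos hu0]
      _ ≤ 1 + u + bernsteinConst y * u ^ 2 := by
          gcongr; exact half_le_bernsteinConst hy0 hy3
  · calc Real.exp u ≤ 1 + u + bernsteinConst u * u ^ 2 :=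
          Real.exp_le_one_add_add_bernsteinConst_mul_sq_of_nonneg hu0.le (hu.trans_lt hy3)
      _ ≤ 1 + u + bernsteinConst y * u ^ 2 := by gcongr; exact bernsteinConst_mono hu hy3

lemma sq_div_le_mul_sub_bernsteinConst_mul {M v z l : ℝ} (hM : 0 < M) (hv : 0 ≤ v) (hz : 0 < z)
    (hl : l = z / (v + M * z)) :
    z ^ 2 / (2 * (v + M * z)) ≤ l * z - bernsteinConst (l * M) * l ^ 2 * v := by
  have hs : 0 < v + M * z := by positivity
  have hden : 0 < 3 * v + 2 * M * z := by positivity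
  have hc : bernsteinConst (l * M) = 3 * (v + M * z) / (2 * (3 * v + 2 * M * z)) := by
    have h : 1 - l * M / 3 = (3 * v + 2 * M * z) / (3 * (v + M * z)) := by
      rw [hl]; field_simp; ring
    rw [bernsteinConst, h]; field_simp
  have hgap : l * z - bernsteinConst (l * M) * l ^ 2 * v - z ^ 2 / (2 * (v + M * z))
      = M * z ^ 3 / ((v + M * z) * (3 * v + 2 * M * z)) := by
    rw [hc, hl]; field_simp; ring
  have : 0 ≤ M * z ^ 3 / ((v + M * z) * (3 * v + 2 * M * z)) := by positivity
  linarith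

namespace MeasureTheory

variable {Ω : Type*} {m0 : MeasurableSpace Ω} {μ : Measure Ω} {ℱ : Filtration ℕ m0}

section

variable [IsFiniteMeasure μ] {W : ℕ → Ω → ℝ}

lemma Supermartingale.integral_stoppedValue_le (hW : Supermartingale W ℱ μ)
    {τ : Ω → WithTop ℕ} (hτ : IsStoppingTime ℱ τ) {N : ℕ} (hτN : ∀ ω, τ ω ≤ N) :
    ∫ ω, stoppedValue W τ ω ∂μ ≤ ∫ ω, W 0 ω ∂μ := by
  have h := hW.neg.expected_stoppedValue_mono (isStoppingTime_const ℱ 0) hτ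
    (fun _ => bot_le) hτN
  have hneg (σ : Ω → WithTop ℕ) : stoppedValue (-W) σ = -stoppedValue W σ := rfl
  simp only [hneg, Pi.neg_apply, integral_neg, neg_le_neg_iff] at h
  simpa [stoppedValue] using h

lemma Supermartingale.mul_measureReal_exists_le_le (hW : Supermartingale W ℱ μ) (hnonneg : 0 ≤ W)
    (ε : ℝ) (n : ℕ) :
    ε * μ.real {ω | ∃ k ≤ n, ε ≤ W k ω} ≤ ∫ ω, W 0 ω ∂μ := by
  let τ : Ω → WithTop ℕ := fun ω => (hittingBtwn W (Set.Ici ε) 0 n ω : ℕ)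
  have hτ : IsStoppingTime ℱ τ :=
    hW.stronglyAdapted.adapted.isStoppingTime_hittingBtwn measurableSet_Ici
  have hτn (ω : Ω) : τ ω ≤ n := WithTop.coe_le_coe.mpr (hittingBtwn_le ω)
  have hint : Integrable (stoppedValue W τ) μ := integrable_stoppedValue ℕ hτ hW.integrable hτn
  set B := {ω | ∃ k ≤ n, ε ≤ W k ω}
  have hB : MeasurableSet B := by
    have : B = ⋃ k ∈ Finset.range (n + 1), {ω | ε ≤ W k ω} := by
      ext ω; simp [B]
    rw [this]
    exact Finset.measurableSet_biUnion _ fun k _ =>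
      measurableSet_le measurable_const ((hW.stronglyMeasurable k).measurable.le (ℱ.le k))
  have hεB : ∀ ω ∈ B, ε ≤ stoppedValue W τ ω := fun ω ⟨k, hkn, hk⟩ =>
    stoppedValue_hittingBtwn_mem ⟨k, ⟨Nat.zero_le _, hkn⟩, hk⟩
  calc ε * μ.real B ≤ ∫ ω in B, stoppedValue W τ ω ∂μ := by
        rw [mul_comm]
        exact setIntegral_ge_of_const_le hB (measure_ne_top μ B) hεB hint.integrableOn
    _ ≤ ∫ ω, stoppedValue W τ ω ∂μ :=
        setIntegral_le_integral hint (ae_of_all _ fun ω => hnonneg _ ω)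
    _ ≤ ∫ ω, W 0 ω ∂μ := hW.integral_stoppedValue_le hτ hτn

/-- Ville's maximal inequality. -/
theorem Supermartingale.measure_exists_ge_le (hW : Supermartingale W ℱ μ) (hnonneg : 0 ≤ W)
    {ε : ℝ} (hε : 0 < ε) :
    μ {ω | ∃ t, ε ≤ W t ω} ≤ ENNReal.ofReal ((∫ ω, W 0 ω ∂μ) / ε) := by
  have hunion : {ω | ∃ t, ε ≤ W t ω} = ⋃ n, {ω | ∃ k ≤ n, ε ≤ W k ω} := by
    ext ω
    simp only [Set.mem_ofPred_eq, Set.mem_iUnion]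
    exact ⟨fun ⟨t, ht⟩ => ⟨t, t, le_rfl, ht⟩, fun ⟨_, k, _, hk⟩ => ⟨k, hk⟩⟩
  have hmono : Monotone fun n => {ω | ∃ k ≤ n, ε ≤ W k ω} :=
    fun _ _ hab _ ⟨k, hk, h⟩ => ⟨k, hk.trans hab, h⟩
  rw [hunion, hmono.directed_le.measure_iUnion]
  refine iSup_le fun n => ?_
  rw [← ofReal_measureReal (measure_ne_top _ _)]
  exact ENNReal.ofReal_le_ofReal <| (le_div_iff₀ hε).2 <| by
    rw [mul_comm]; exact hW.mul_measureReal_exists_le_le hnonneg ε n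

end

section

variable {Z : ℕ → Ω → ℝ}

lemma integrable_exp_of_ae_le [IsFiniteMeasure μ] {f : Ω → ℝ} (hf : AEStronglyMeasurable f μ)
    {M : ℝ} (hfM : ∀ᵐ ω ∂μ, f ω ≤ M) : Integrable (fun ω => Real.exp (f ω)) μ := by
  refine (integrable_const (Real.exp M)).mono' (Real.continuous_exp.comp_aestronglyMeasurable hf) ?_
  filter_upwards [hfM] with ω hω
  rw [Real.norm_eq_abs, abs_of_pos (Real.exp_pos _)]
  exact Real.exp_le_exp.2 hω

lemma ae_sub_le_mul_of_ae_succ_sub_le {M : ℝ} (hbdd : ∀ t, ∀ᵐ ω ∂μ, Z (t + 1) ω - Z t ω ≤ M)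
    (t : ℕ) : ∀ᵐ ω ∂μ, Z t ω - Z 0 ω ≤ t * M := by
  induction t with
  | zero => simp
  | succ t ih =>
    filter_upwards [ih, hbdd t] with ω h₁ h₂
    push_cast
    linarith

variable (μ ℱ Z) in
noncomputable def predictableQuadVar (t : ℕ) : Ω → ℝ :=
  ∑ i ∈ range t, μ[fun ω => (Z (i + 1) ω - Z i ω) ^ 2 | ℱ i]

lemma predictableQuadVar_zero : predictableQuadVar μ ℱ Z 0 = 0 := by
  simp [predictableQuadVar]

lemma predictableQuadVar_succ (t : ℕ) :
    predictableQuadVar μ ℱ Z (t + 1) =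
      predictableQuadVar μ ℱ Z t + μ[fun ω => (Z (t + 1) ω - Z t ω) ^ 2 | ℱ t] :=
  sum_range_succ _ _

lemma predictableQuadVar_apply_eq_sum_Icc (t : ℕ) (ω : Ω) :
    predictableQuadVar μ ℱ Z t ω =
      ∑ i ∈ Icc 1 t, (μ[fun ω' => (Z i ω' - Z (i - 1) ω') ^ 2 | ℱ (i - 1)]) ω := by
  induction t with
  | zero => simp [predictableQuadVar_zero]
  | succ t ih =>
    rw [predictableQuadVar_succ, Pi.add_apply, ih, sum_Icc_succ_top (by omega)]
    rfl

lemma stronglyMeasurable_predictableQuadVar (t : ℕ) :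
    StronglyMeasurable[ℱ t] (predictableQuadVar μ ℱ Z t) :=
  Finset.stronglyMeasurable_sum _ fun _ hi =>
    stronglyMeasurable_condExp.mono (ℱ.mono (mem_range.1 hi).le)

lemma predictableQuadVar_nonneg (t : ℕ) : 0 ≤ᵐ[μ] predictableQuadVar μ ℱ Z t := by
  have h (i : ℕ) : 0 ≤ᵐ[μ] μ[fun ω => (Z (i + 1) ω - Z i ω) ^ 2 | ℱ i] :=
    condExp_nonneg (ae_of_all _ fun ω => sq_nonneg _)
  filter_upwards [ae_all_iff.2 h] with ω hω
  rw [predictableQuadVar, Finset.sum_apply]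
  exact sum_nonneg fun i _ => hω i

lemma Martingale.condExp_succ_sub_ae_eq_zero [IsFiniteMeasure μ] (hZ : Martingale Z ℱ μ)
    (t : ℕ) : μ[fun ω => Z (t + 1) ω - Z t ω | ℱ t] =ᵐ[μ] 0 := by
  have hZt : μ[Z t | ℱ t] = Z t :=
    condExp_of_stronglyMeasurable (ℱ.le t) (hZ.stronglyAdapted t) (hZ.integrable t)
  filter_upwards [condExp_sub (hZ.integrable (t + 1)) (hZ.integrable t) (ℱ t),
    hZ.condExp_ae_eq t.le_succ] with ω h₁ h₂
  simp only [Pi.sub_apply, Pi.zero_apply, hZt] at h₁ ⊢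
  rw [show (fun ω => Z (t + 1) ω - Z t ω) = Z (t + 1) - Z t from rfl, h₁, h₂, sub_self]

lemma Martingale.condExp_exp_mul_succ_sub_le [IsFiniteMeasure μ] (hZ : Martingale Z ℱ μ)
    {t : ℕ} (hsq : MemLp (fun ω => Z (t + 1) ω - Z t ω) 2 μ) {M l c : ℝ}
    (hbdd : ∀ᵐ ω ∂μ, Z (t + 1) ω - Z t ω ≤ M) (hl : 0 ≤ l)
    (hexp : ∀ u ≤ l * M, Real.exp u ≤ 1 + u + c * u ^ 2) :
    μ[fun ω => Real.exp (l * (Z (t + 1) ω - Z t ω)) | ℱ t] ≤ᵐ[μ]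
      fun ω => Real.exp (c * l ^ 2 * (μ[fun ω => (Z (t + 1) ω - Z t ω) ^ 2 | ℱ t]) ω) := by
  set Δ : Ω → ℝ := fun ω => Z (t + 1) ω - Z t ω
  have hΔ : Integrable Δ μ := (hZ.integrable (t + 1)).sub (hZ.integrable t)
  have hΔ2 : Integrable (fun ω => Δ ω ^ 2) μ := hsq.integrable_sq
  have hlΔ : ∀ᵐ ω ∂μ, l * Δ ω ≤ l * M := by
    filter_upwards [hbdd] with ω hω using mul_le_mul_of_nonneg_left hω hl
  have hquad : (fun ω => Real.exp (l * Δ ω)) ≤ᵐ[μ]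
      (fun _ => (1 : ℝ)) + l • Δ + (c * l ^ 2) • fun ω => Δ ω ^ 2 := by
    filter_upwards [hlΔ] with ω hω
    simpa [mul_pow, mul_assoc] using hexp _ hω
  have hlin : μ[(fun _ => (1 : ℝ)) + l • Δ + (c * l ^ 2) • fun ω => Δ ω ^ 2 | ℱ t] =ᵐ[μ]
      (fun _ => (1 : ℝ)) + l • μ[Δ | ℱ t] + (c * l ^ 2) • μ[fun ω => Δ ω ^ 2 | ℱ t] := by
    refine (condExp_add ((integrable_const _).add (hΔ.smul l)) (hΔ2.smul _) _).trans ?_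
    refine Filter.EventuallyEq.add ?_ (condExp_smul _ _ _)
    refine (condExp_add (integrable_const _) (hΔ.smul l) _).trans ?_
    rw [condExp_const (ℱ.le t)]
    exact Filter.EventuallyEq.rfl.add (condExp_smul _ _ _)
  filter_upwards [condExp_mono (integrable_exp_of_ae_le (hΔ.1.const_mul l) hlΔ)
    (((integrable_const _).add (hΔ.smul l)).add (hΔ2.smul _)) hquad, hlin,
    hZ.condExp_succ_sub_ae_eq_zero t] with ω h₁ h₂ h₃
  rw [h₂] at h₁
  simp only [Pi.add_apply, Pi.smul_apply, smul_eq_mul] at h₁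
  change μ[Δ | ℱ t] ω = 0 at h₃
  rw [h₃, mul_zero, add_zero] at h₁
  linarith [Real.add_one_le_exp (c * l ^ 2 * (μ[fun ω => Δ ω ^ 2 | ℱ t]) ω)]

theorem Martingale.supermartingale_exp_mul_sub_predictableQuadVar [IsFiniteMeasure μ]
    (hZ : Martingale Z ℱ μ) (hsq : ∀ t, MemLp (fun ω => Z (t + 1) ω - Z t ω) 2 μ) {M l c : ℝ}
    (hbdd : ∀ t, ∀ᵐ ω ∂μ, Z (t + 1) ω - Z t ω ≤ M) (hl : 0 ≤ l) (hc : 0 ≤ c)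
    (hexp : ∀ u ≤ l * M, Real.exp u ≤ 1 + u + c * u ^ 2) :
    Supermartingale (fun t ω =>
      Real.exp (l * (Z t ω - Z 0 ω) - c * l ^ 2 * predictableQuadVar μ ℱ Z t ω)) ℱ μ := by
  set W : ℕ → Ω → ℝ :=
    fun t ω => Real.exp (l * (Z t ω - Z 0 ω) - c * l ^ 2 * predictableQuadVar μ ℱ Z t ω)
  have hexponent : StronglyAdapted ℱ fun t ω =>
      l * (Z t ω - Z 0 ω) - c * l ^ 2 * predictableQuadVar μ ℱ Z t ω := fun t =>
    (((hZ.stronglyAdapted t).sub ((hZ.stronglyAdapted 0).mono (ℱ.mono t.zero_le))).const_mul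
      l).sub ((stronglyMeasurable_predictableQuadVar t).const_mul _)
  have hadapt : StronglyAdapted ℱ W := fun t =>
    Real.continuous_exp.comp_stronglyMeasurable (hexponent t)
  have hint (t : ℕ) : Integrable (W t) μ := by
    refine integrable_exp_of_ae_le ((hexponent t).mono (ℱ.le t)).aestronglyMeasurable
      (M := l * (t * M)) ?_
    filter_upwards [ae_sub_le_mul_of_ae_succ_sub_le hbdd t, predictableQuadVar_nonneg t]
      with ω h₁ h₂
    have : 0 ≤ c * l ^ 2 * predictableQuadVar μ ℱ Z t ω := by
      simp only [Pi.zero_apply] at h₂; positivity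
    linarith [mul_le_mul_of_nonneg_left h₁ hl]
  refine supermartingale_nat hadapt hint fun t => ?_
  set U := μ[fun ω => (Z (t + 1) ω - Z t ω) ^ 2 | ℱ t]
  set A : Ω → ℝ := fun ω => W t ω * Real.exp (-(c * l ^ 2 * U ω))
  set E : Ω → ℝ := fun ω => Real.exp (l * (Z (t + 1) ω - Z t ω))
  have hA : StronglyMeasurable[ℱ t] A :=
    (hadapt t).mul (Real.continuous_exp.comp_stronglyMeasurable
      (stronglyMeasurable_condExp.const_mul _).neg)
  have hWsucc : W (t + 1) = A * E := by
    funext ω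
    simp only [W, A, E, U, predictableQuadVar_succ, Pi.add_apply, Pi.mul_apply, ← Real.exp_add]
    congr 1
    ring
  have hE : Integrable E μ := integrable_exp_of_ae_le
    ((((hZ.integrable (t + 1)).sub (hZ.integrable t)).1.const_mul l))
    (by filter_upwards [hbdd t] with ω hω using mul_le_mul_of_nonneg_left hω hl)
  rw [hWsucc]
  filter_upwards [condExp_mul_of_stronglyMeasurable_left hA (hWsucc ▸ hint (t + 1)) hE,
    hZ.condExp_exp_mul_succ_sub_le (hsq t) (hbdd t) hl hexp] with ω h₁ h₂
  calc μ[A * E | ℱ t] ω = A ω * μ[E | ℱ t] ω := h₁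
    _ ≤ A ω * Real.exp (c * l ^ 2 * U ω) :=
        mul_le_mul_of_nonneg_left h₂ (by positivity)
    _ = W t ω := by simp only [A, mul_assoc, ← Real.exp_add, neg_add_cancel, Real.exp_zero, mul_one]

end

end MeasureTheory

/-- **Freedman's martingale inequality** (Theorem 2.2 of Alon et al., used as
Theorem `thm:alon`): if `(Z t)` is a martingale w.r.t. the filtration `ℱ` with
square-integrable increments bounded above by `M`, and
`V t = ∑_{i=1}^t Var(Z i | ℱ (i-1)) = ∑_{i=1}^t E[(Z i - Z (i-1))^2 | ℱ (i-1)]`,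
then for all `z, v > 0`,
`Pr[∃ t ≥ 1, Z t ≥ Z 0 + z ∧ V t ≤ v] ≤ exp (-z^2 / (2*(v + M*z)))`. -/
theorem freedman_martingale_inequality
    {Ω : Type*} {m0 : MeasurableSpace Ω} {μ : Measure Ω} [IsProbabilityMeasure μ]
    (ℱ : Filtration ℕ m0) (Z : ℕ → Ω → ℝ)
    (hmart : Martingale Z ℱ μ)
    (hsq : ∀ t : ℕ, MemLp (fun ω => Z (t + 1) ω - Z t ω) 2 μ)
    (M : ℝ) (hM : 0 < M)
    (hbdd : ∀ t : ℕ, ∀ᵐ ω ∂μ, Z (t + 1) ω - Z t ω ≤ M)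
    (V : ℕ → Ω → ℝ)
    (hV : ∀ t ω, V t ω =
      ∑ i ∈ Finset.Icc 1 t, (μ[fun ω' => (Z i ω' - Z (i - 1) ω') ^ 2|ℱ (i - 1)]) ω)
    (z v : ℝ) (hz : 0 < z) (hv : 0 < v) :
    μ {ω | ∃ t : ℕ, 1 ≤ t ∧ Z 0 ω + z ≤ Z t ω ∧ V t ω ≤ v}
      ≤ ENNReal.ofReal (Real.exp (-z ^ 2 / (2 * (v + M * z)))) := by
  set l := z / (v + M * z) with hl
  set c := bernsteinConst (l * M)
  have hl0 : 0 ≤ l := by positivity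
  have hlM : l * M < 3 := by
    rw [hl, div_mul_eq_mul_div, div_lt_iff₀ (by positivity)]
    nlinarith
  have hc : 0 ≤ c := by linarith [half_le_bernsteinConst (by positivity) hlM]
  have hW := hmart.supermartingale_exp_mul_sub_predictableQuadVar hsq hbdd hl0 hc
    fun u hu => Real.exp_le_one_add_add_bernsteinConst_mul_sq (by positivity) hlM hu
  have hV_eq (t : ℕ) (ω : Ω) : V t ω = predictableQuadVar μ ℱ Z t ω :=
    (hV t ω).trans (predictableQuadVar_apply_eq_sum_Icc t ω).symm
  calc μ {ω | ∃ t : ℕ, 1 ≤ t ∧ Z 0 ω + z ≤ Z t ω ∧ V t ω ≤ v}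
      ≤ μ {ω | ∃ t, Real.exp (l * z - c * l ^ 2 * v) ≤
          Real.exp (l * (Z t ω - Z 0 ω) - c * l ^ 2 * predictableQuadVar μ ℱ Z t ω)} := by
        refine measure_mono fun ω ⟨t, _, hZt, hVt⟩ => ⟨t, Real.exp_le_exp.2 ?_⟩
        rw [hV_eq] at hVt
        have := mul_le_mul_of_nonneg_left hVt (by positivity : 0 ≤ c * l ^ 2)
        nlinarith
    _ ≤ ENNReal.ofReal (Real.exp (-(l * z - c * l ^ 2 * v))) := by
        refine (hW.measure_exists_ge_le (fun _ _ => (Real.exp_pos _).le)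
          (Real.exp_pos _)).trans_eq ?_
        simp [predictableQuadVar_zero, ← Real.exp_neg]
    _ ≤ ENNReal.ofReal (Real.exp (-z ^ 2 / (2 * (v + M * z)))) := by
        refine ENNReal.ofReal_le_ofReal (Real.exp_le_exp.2 ?_)
        rw [neg_div]
        exact neg_le_neg (sq_div_le_mul_sub_bernsteinConst_mul hM hv.le hz hl)
end

section
/- Let (F_i)_{i≥0} be a filtration and (χ_i)_{i≥1} a sequence of {0,1}-valued random variables such that χ_i is F_i-measurable for each i. Let P_i = E[χ_i | F_{i−1}] and Z_t = Σ_{i=1}^t (χ_i − P_i). Then for all z, v > 0, Pr[∃ t ≥ 1 : Z_t ≥ z and Σ_{i=1}^t P_i ≤ v] ≤ exp(−z² / (2(v + z))). -/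
/-!
For every real `l` the process `exp (l ∑ χ_i - (e^l - 1) ∑ P_i)` is a positive supermartingale
starting at `1`, because `χ_i ∈ {0,1}` gives
`E[e^{l χ_i} | ℱ (i-1)] = 1 + (e^l - 1) P_i ≤ e^{(e^l - 1) P_i}`.
For `l ≥ 0`, on the event in question it reaches `exp (l z - (e^l - 1 - l) v)`, so Ville's
maximal inequality (optional stopping at the first passage time) bounds the probability by the
inverse of that value.
The choice `l = z / (v + z)` and the estimate `2 (1 - l) (e^l - 1 - l) ≤ l²` give the exponent
`z² / (2 (v + z))`.
-/

open MeasureTheory Finset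

theorem two_mul_one_sub_mul_exp_sub_one_sub_le_sq {x : ℝ} (hx : 0 ≤ x) :
    2 * (1 - x) * (Real.exp x - 1 - x) ≤ x ^ 2 := by
  set F : ℝ → ℝ := fun u => u ^ 2 - 2 * (1 - u) * (Real.exp u - 1 - u)
  have hF : ∀ u, HasDerivAt F (2 * u * (Real.exp u - 1)) u := fun u => by
    have := ((hasDerivAt_pow 2 u).sub
      ((((hasDerivAt_id u).const_sub 1).const_mul 2).mul
        (((Real.hasDerivAt_exp u).sub_const 1).sub (hasDerivAt_id u))))
    refine this.congr_deriv ?_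
    simp only [Pi.sub_apply, id, Nat.cast_ofNat, Nat.add_one_sub_one, pow_one]
    ring
  have hmono : MonotoneOn F (Set.Ici 0) := by
    refine monotoneOn_of_deriv_nonneg (convex_Ici 0)
      (fun u _ => (hF u).continuousAt.continuousWithinAt)
      (fun u _ => (hF u).differentiableAt.differentiableWithinAt) fun u hu => ?_
    rw [interior_Ici] at hu
    rw [(hF u).deriv]
    exact mul_nonneg (by linarith [hu.out]) (sub_nonneg.2 (Real.one_le_exp hu.out.le))
  simpa [F] using hmono Set.self_mem_Ici hx hx

theorem sq_div_le_freedman_exponent {z v : ℝ} (hz : 0 ≤ z) (hvz : 0 < v + z) :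
    z ^ 2 / (2 * (v + z)) ≤
      z / (v + z) * z - (Real.exp (z / (v + z)) - 1 - z / (v + z)) * v := by
  set l := z / (v + z)
  have hl : l * (v + z) = z := div_mul_cancel₀ z hvz.ne'
  have hquad := two_mul_one_sub_mul_exp_sub_one_sub_le_sq (div_nonneg hz hvz.le : 0 ≤ l)
  have hcv : 2 * ((Real.exp l - 1 - l) * v) ≤ l * z :=
    calc 2 * ((Real.exp l - 1 - l) * v)
        = 2 * (1 - l) * (Real.exp l - 1 - l) * (v + z) := by
          linear_combination (2 * (Real.exp l - 1 - l)) * hl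
      _ ≤ l ^ 2 * (v + z) := mul_le_mul_of_nonneg_right hquad hvz.le
      _ = l * z := by linear_combination l * hl
  have : z ^ 2 / (2 * (v + z)) = l * z / 2 := by
    rw [div_eq_div_iff (by positivity) two_ne_zero]; linear_combination (-2 * z) * hl
  linarith

namespace MeasureTheory.Supermartingale

variable {Ω : Type*} {m0 : MeasurableSpace Ω} {μ : Measure Ω} [IsFiniteMeasure μ]
  {ℱ : Filtration ℕ m0} {f : ℕ → Ω → ℝ}

theorem measure_exists_le_ge_le (hf : Supermartingale f ℱ μ) (hnonneg : ∀ n ω, 0 ≤ f n ω)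
    {C : ℝ} (hC : 0 < C) (n : ℕ) :
    μ {ω | ∃ k ≤ n, C ≤ f k ω} ≤ ENNReal.ofReal ((∫ ω, f 0 ω ∂μ) / C) := by
  set A := {ω | ∃ k ≤ n, C ≤ f k ω}
  set τ : Ω → ℕ∞ := fun ω => (hittingBtwn f (Set.Ici C) 0 n ω : ℕ)
  have hτ : IsStoppingTime ℱ τ :=
    hf.stronglyAdapted.adapted.isStoppingTime_hittingBtwn measurableSet_Ici
  have hτ_le : ∀ ω, τ ω ≤ n := fun ω => WithTop.coe_le_coe.2 (hittingBtwn_le ω)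
  have hint : Integrable (stoppedValue f τ) μ :=
    integrable_stoppedValue ℕ hτ hf.integrable hτ_le
  have hA : MeasurableSet A := by
    have : A = ⋃ k ≤ n, {ω | C ≤ f k ω} := by ext; simp [A]
    rw [this]
    exact .iUnion fun k => .iUnion fun _ =>
      measurableSet_le measurable_const ((hf.stronglyAdapted k).mono (ℱ.le k)).measurable
  have hge : ∀ ω ∈ A, C ≤ stoppedValue f τ ω := fun ω ⟨k, hk, hCk⟩ =>
    stoppedValue_hittingBtwn_mem ⟨k, ⟨Nat.zero_le _, hk⟩, hCk⟩
  have hstop : ∫ ω, stoppedValue f τ ω ∂μ ≤ ∫ ω, f 0 ω ∂μ := by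
    have := hf.neg.expected_stoppedValue_mono (isStoppingTime_const ℱ 0) hτ (fun _ => zero_le)
      hτ_le
    simpa [stoppedValue, integral_neg] using this
  have : C * μ.real A ≤ ∫ ω, f 0 ω ∂μ :=
    calc C * μ.real A ≤ ∫ ω in A, stoppedValue f τ ω ∂μ :=
          setIntegral_ge_of_const_le_real hA (measure_ne_top μ A) hge hint.integrableOn
      _ ≤ ∫ ω, stoppedValue f τ ω ∂μ :=
          setIntegral_le_integral hint (.of_forall fun ω => hnonneg _ ω)
      _ ≤ ∫ ω, f 0 ω ∂μ := hstop
  rw [← ofReal_measureReal]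
  exact ENNReal.ofReal_le_ofReal (by rwa [le_div_iff₀ hC, mul_comm])

theorem measure_exists_ge_le_s1 (hf : Supermartingale f ℱ μ) (hnonneg : ∀ n ω, 0 ≤ f n ω)
    {C : ℝ} (hC : 0 < C) :
    μ {ω | ∃ n, C ≤ f n ω} ≤ ENNReal.ofReal ((∫ ω, f 0 ω ∂μ) / C) := by
  rw [Set.ofPred_exists, measure_iUnion_eq_iSup_accumulate]
  refine iSup_le fun n => le_of_eq_of_le ?_ (measure_exists_le_ge_le hf hnonneg hC n)
  congr 1
  ext ω
  simp [Set.mem_accumulate]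

end MeasureTheory.Supermartingale

noncomputable def expCompensated {Ω : Type*} (χ P : ℕ → Ω → ℝ) (l : ℝ) (t : ℕ) (ω : Ω) : ℝ :=
  Real.exp (l * ∑ i ∈ Icc 1 t, χ i ω - (Real.exp l - 1) * ∑ i ∈ Icc 1 t, P i ω)

theorem exp_mul_eq_one_add_mul_of_eq_zero_or_eq_one {x : ℝ} (hx : x = 0 ∨ x = 1) (l : ℝ) :
    Real.exp (l * x) = 1 + (Real.exp l - 1) * x := by
  rcases hx with rfl | rfl <;> simp

theorem abs_sum_Icc_le {f : ℕ → ℝ} {t : ℕ} (hf : ∀ i ∈ Icc 1 t, |f i| ≤ 1) :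
    |∑ i ∈ Icc 1 t, f i| ≤ t :=
  (abs_sum_le_sum_abs _ _).trans ((sum_le_card_nsmul _ _ 1 hf).trans (by simp))

theorem abs_le_one_of_eq_zero_or_eq_one {x : ℝ} (hx : x = 0 ∨ x = 1) : |x| ≤ 1 := by
  rcases hx with rfl | rfl <;> simp

namespace expCompensated

variable {Ω : Type*} {m0 : MeasurableSpace Ω} {μ : Measure Ω} {ℱ : Filtration ℕ m0}
  {χ P : ℕ → Ω → ℝ} {l : ℝ}

@[simp]
theorem zero : expCompensated χ P l 0 = 1 := by
  ext; simp [expCompensated]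

theorem succ (n : ℕ) (ω : Ω) : expCompensated χ P l (n + 1) ω =
    expCompensated χ P l n ω * Real.exp (l * χ (n + 1) ω - (Real.exp l - 1) * P (n + 1) ω) := by
  simp only [expCompensated, ← Real.exp_add, sum_Icc_succ_top (Nat.le_add_left 1 n)]
  ring_nf

theorem pos (t : ℕ) (ω : Ω) : 0 < expCompensated χ P l t ω := Real.exp_pos _

theorem stronglyAdapted (hχ : ∀ i, 1 ≤ i → StronglyMeasurable[ℱ i] (χ i))
    (hP : ∀ i, 1 ≤ i → StronglyMeasurable[ℱ (i - 1)] (P i)) :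
    StronglyAdapted ℱ (expCompensated χ P l) := fun t => by
  refine Real.continuous_exp.comp_stronglyMeasurable
    (((stronglyMeasurable_fun_sum _ fun i hi => ?_).const_mul l).sub
      ((stronglyMeasurable_fun_sum _ fun i hi => ?_).const_mul _))
  · exact (hχ i (mem_Icc.1 hi).1).mono (ℱ.mono (mem_Icc.1 hi).2)
  · exact (hP i (mem_Icc.1 hi).1).mono (ℱ.mono (by grind))

theorem integrable [IsFiniteMeasure μ] (hχ : ∀ i, 1 ≤ i → StronglyMeasurable[ℱ i] (χ i))
    (hval : ∀ i, 1 ≤ i → ∀ ω, χ i ω = 0 ∨ χ i ω = 1)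
    (hP : ∀ i, 1 ≤ i → P i = μ[χ i|ℱ (i - 1)]) (t : ℕ) :
    Integrable (expCompensated χ P l t) μ := by
  have hPmeas (i) (hi : 1 ≤ i) : StronglyMeasurable[ℱ (i - 1)] (P i) :=
    hP i hi ▸ stronglyMeasurable_condExp
  have hPbdd : ∀ᵐ ω ∂μ, ∀ i ∈ Icc 1 t, |P i ω| ≤ 1 := by
    refine (Filter.eventually_all_finset _).2 fun i hi => ?_
    rw [hP i (mem_Icc.1 hi).1]
    exact ae_bdd_abs_condExp_of_ae_bdd_abs
      (.of_forall fun ω => abs_le_one_of_eq_zero_or_eq_one (hval i (mem_Icc.1 hi).1 ω))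
  refine Integrable.of_bound (C := Real.exp (|l| * t + |Real.exp l - 1| * t))
    ((stronglyAdapted hχ hPmeas t).mono (ℱ.le t)).aestronglyMeasurable ?_
  filter_upwards [hPbdd] with ω hω
  rw [Real.norm_eq_abs, abs_of_pos (pos t ω), expCompensated, Real.exp_le_exp]
  have hχbdd : |∑ i ∈ Icc 1 t, χ i ω| ≤ t :=
    abs_sum_Icc_le fun i hi => abs_le_one_of_eq_zero_or_eq_one (hval i (mem_Icc.1 hi).1 ω)
  calc _ ≤ |l * ∑ i ∈ Icc 1 t, χ i ω| + |(Real.exp l - 1) * ∑ i ∈ Icc 1 t, P i ω| := by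
        linarith [le_abs_self (l * ∑ i ∈ Icc 1 t, χ i ω),
          neg_abs_le ((Real.exp l - 1) * ∑ i ∈ Icc 1 t, P i ω)]
    _ ≤ |l| * t + |Real.exp l - 1| * t := by
        rw [abs_mul, abs_mul]
        gcongr
        exact abs_sum_Icc_le hω

theorem condExp_succ_le [IsFiniteMeasure μ] (hχ : ∀ i, 1 ≤ i → StronglyMeasurable[ℱ i] (χ i))
    (hval : ∀ i, 1 ≤ i → ∀ ω, χ i ω = 0 ∨ χ i ω = 1)
    (hP : ∀ i, 1 ≤ i → P i = μ[χ i|ℱ (i - 1)]) (n : ℕ) :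
    μ[expCompensated χ P l (n + 1)|ℱ n] ≤ᵐ[μ] expCompensated χ P l n := by
  have hn : 1 ≤ n + 1 := Nat.le_add_left 1 n
  set s := Real.exp l - 1
  have hPmeas (i) (hi : 1 ≤ i) : StronglyMeasurable[ℱ (i - 1)] (P i) :=
    hP i hi ▸ stronglyMeasurable_condExp
  set G : Ω → ℝ := fun ω => expCompensated χ P l n ω * Real.exp (-(s * P (n + 1) ω))
  have hG : StronglyMeasurable[ℱ n] G := (stronglyAdapted hχ hPmeas n).mul
    (Real.continuous_exp.comp_stronglyMeasurable ((hPmeas (n + 1) hn).const_mul s).neg)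
  have hχint : Integrable (χ (n + 1)) μ :=
    .of_bound ((hχ _ hn).mono (ℱ.le _)).aestronglyMeasurable 1
      (.of_forall fun ω => abs_le_one_of_eq_zero_or_eq_one (hval _ hn ω))
  have hfactor : expCompensated χ P l (n + 1) = G * ((fun _ => 1) + s • χ (n + 1)) := by
    ext ω
    rw [succ, sub_eq_add_neg, Real.exp_add,
      exp_mul_eq_one_add_mul_of_eq_zero_or_eq_one (hval _ hn ω)]
    simp only [G, Pi.mul_apply, Pi.add_apply, Pi.smul_apply, smul_eq_mul]
    ring
  have hcond : μ[(fun _ => 1) + s • χ (n + 1)|ℱ n] =ᵐ[μ] (fun _ => 1) + s • P (n + 1) := by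
    have hPn : P (n + 1) = μ[χ (n + 1)|ℱ n] := hP _ hn
    refine (condExp_add (integrable_const 1) (hχint.smul s) _).trans ?_
    rw [condExp_const (ℱ.le n), hPn]
    exact (condExp_smul s _ _).add_left
  rw [hfactor]
  filter_upwards [condExp_mul_of_stronglyMeasurable_left hG (hfactor ▸ integrable hχ hval hP _)
    ((integrable_const 1).add (hχint.smul s)), hcond] with ω hpull hω
  rw [hpull, Pi.mul_apply, hω]
  calc G ω * (1 + s * P (n + 1) ω) ≤ G ω * Real.exp (s * P (n + 1) ω) := by
        gcongr
        · exact (mul_pos (pos n ω) (Real.exp_pos _)).le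
        · linarith [Real.add_one_le_exp (s * P (n + 1) ω)]
    _ = expCompensated χ P l n ω := by
        simp only [G, mul_assoc, ← Real.exp_add, neg_add_cancel, Real.exp_zero, mul_one]

theorem supermartingale [IsFiniteMeasure μ] (hχ : ∀ i, 1 ≤ i → StronglyMeasurable[ℱ i] (χ i))
    (hval : ∀ i, 1 ≤ i → ∀ ω, χ i ω = 0 ∨ χ i ω = 1)
    (hP : ∀ i, 1 ≤ i → P i = μ[χ i|ℱ (i - 1)]) :
    Supermartingale (expCompensated χ P l) ℱ μ :=
  supermartingale_nat (stronglyAdapted hχ fun i hi => hP i hi ▸ stronglyMeasurable_condExp)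
    (integrable hχ hval hP) (condExp_succ_le hχ hval hP)

end expCompensated

theorem repeat_martingale_bound_general
    {Ω : Type*} {m0 : MeasurableSpace Ω} {μ : Measure Ω} [IsProbabilityMeasure μ]
    (ℱ : Filtration ℕ m0) (χ : ℕ → Ω → ℝ)
    (hmeas : ∀ i : ℕ, 1 ≤ i → StronglyMeasurable[ℱ i] (χ i))
    (hval : ∀ i : ℕ, 1 ≤ i → ∀ ω, χ i ω = 0 ∨ χ i ω = 1)
    (P : ℕ → Ω → ℝ) (hP : ∀ i : ℕ, 1 ≤ i → P i = μ[χ i|ℱ (i - 1)])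
    (Z : ℕ → Ω → ℝ)
    (hZ : ∀ t ω, Z t ω = ∑ i ∈ Finset.Icc 1 t, (χ i ω - P i ω))
    (z v : ℝ) (hz : 0 < z) :
    μ {ω | ∃ t : ℕ, 1 ≤ t ∧ z ≤ Z t ω ∧ ∑ i ∈ Finset.Icc 1 t, P i ω ≤ v}
      ≤ ENNReal.ofReal (Real.exp (-z ^ 2 / (2 * (v + z)))) := by
  rcases le_or_gt (v + z) 0 with hvz | hvz
  · refine prob_le_one.trans (ENNReal.one_le_ofReal.2 (Real.one_le_exp ?_))
    exact div_nonneg_of_nonpos (neg_nonpos.2 (sq_nonneg z)) (by linarith)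
  set l := z / (v + z)
  set c := Real.exp l - 1 - l
  have hl : 0 ≤ l := div_nonneg hz.le hvz.le
  have hc : 0 ≤ c := by linarith [Real.add_one_le_exp l]
  calc _ ≤ μ {ω | ∃ t, Real.exp (l * z - c * v) ≤ expCompensated χ P l t ω} := by
        refine measure_mono fun ω ⟨t, _, hzt, hPt⟩ => ⟨t, Real.exp_le_exp.2 ?_⟩
        rw [hZ, sum_sub_distrib] at hzt
        linarith [mul_le_mul_of_nonneg_left hzt hl, mul_le_mul_of_nonneg_left hPt hc]
    _ ≤ ENNReal.ofReal ((∫ ω, expCompensated χ P l 0 ω ∂μ) / Real.exp (l * z - c * v)) :=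
        (expCompensated.supermartingale hmeas hval hP).measure_exists_ge_le_s1
          (fun t ω => (expCompensated.pos t ω).le) (Real.exp_pos _)
    _ ≤ ENNReal.ofReal (Real.exp (-z ^ 2 / (2 * (v + z)))) := by
        simp only [expCompensated.zero, Pi.one_apply, integral_const, probReal_univ, one_smul,
          one_div, ← Real.exp_neg]
        gcongr
        linarith [sq_div_le_freedman_exponent hz.le hvz, neg_div (2 * (v + z)) (z ^ 2)]

/-- Corollary `cor:martbound`: if `χ i` are `{0,1}`-valued random variables with `χ i`
measurable w.r.t. `ℱ i`, `P i = E[χ i | ℱ (i-1)]` and `Z t = ∑_{i=1}^t (χ i - P i)`, then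
for all `z, v > 0`,
`Pr[∃ t ≥ 1, Z t ≥ z ∧ ∑_{i=1}^t P i ≤ v] ≤ exp (-z^2 / (2*(v + z)))`. -/
theorem repeat_martingale_bound
    {Ω : Type*} {m0 : MeasurableSpace Ω} {μ : Measure Ω} [IsProbabilityMeasure μ]
    (ℱ : Filtration ℕ m0) (χ : ℕ → Ω → ℝ)
    (hmeas : ∀ i : ℕ, 1 ≤ i → StronglyMeasurable[ℱ i] (χ i))
    (hval : ∀ i : ℕ, 1 ≤ i → ∀ ω, χ i ω = 0 ∨ χ i ω = 1)
    (P : ℕ → Ω → ℝ) (hP : ∀ i : ℕ, 1 ≤ i → P i = μ[χ i|ℱ (i - 1)])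
    (Z : ℕ → Ω → ℝ)
    (hZ : ∀ t ω, Z t ω = ∑ i ∈ Finset.Icc 1 t, (χ i ω - P i ω))
    (z v : ℝ) (hz : 0 < z) (hv : 0 < v) :
    μ {ω | ∃ t : ℕ, 1 ≤ t ∧ z ≤ Z t ω ∧ ∑ i ∈ Finset.Icc 1 t, P i ω ≤ v}
      ≤ ENNReal.ofReal (Real.exp (-z ^ 2 / (2 * (v + z)))) :=
  repeat_martingale_bound_general ℱ χ hmeas hval P hP Z hZ z v hz
end

section
/- For every ε, δ ∈ (0,1), running the SumApprox sampling process with threshold k = k_{ε,δ} = ⌈((2 + 4.4ε)/ε²)·ln(3/δ)⌉ yields an estimate Γ̂ = W/k satisfying Pr[|Γ̂ − Γ| ≥ εΓ] ≤ 2δ/3. -/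
open MeasureTheory ProbabilityTheory Finset

/-- The set `{X 1, …, X (i-1)}` of distinct elements drawn strictly before draw `i`. -/
def drawnSet {V : Type*} [DecidableEq V] {Ω : Type*}
    (X : ℕ → Ω → V) (i : ℕ) (ω : Ω) : Finset V :=
  (Finset.Icc 1 (i - 1)).image fun j => X j ω

/-- The number of repeats among the first `i` draws: `∑_{j=1}^i χ_j` where `χ_j` is the
indicator that `X j ∈ {X 1, …, X (j-1)}`. -/
def repeatCount {V : Type*} [DecidableEq V] {Ω : Type*}
    (X : ℕ → Ω → V) (i : ℕ) (ω : Ω) : ℕ :=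
  ((Finset.Icc 1 i).filter fun j => X j ω ∈ drawnSet X j ω).card

/-- The stopping time `T = min {i ≥ 1 : ∑_{j=1}^i χ_j = k}` of the SumApprox process. -/
noncomputable def stopTime {V : Type*} [DecidableEq V] {Ω : Type*}
    (X : ℕ → Ω → V) (k : ℕ) (ω : Ω) : ℕ :=
  sInf {i | 1 ≤ i ∧ repeatCount X i ω = k}

/-- `P i = ∑_{u ∈ {X 1, …, X (i-1)}} π u`, the `π`-mass of the elements drawn before
draw `i`. -/
def massBefore {V : Type*} [DecidableEq V] {Ω : Type*}
    (π : V → ℝ) (X : ℕ → Ω → V) (i : ℕ) (ω : Ω) : ℝ :=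
  ∑ u ∈ drawnSet X i ω, π u

/-- `W = Γ * ∑_{i=1}^T P i`, the accumulated (unnormalized) mass of the SumApprox
process with threshold `k`. -/
noncomputable def sumApproxW {V : Type*} [DecidableEq V] {Ω : Type*}
    (Γ : ℝ) (π : V → ℝ) (X : ℕ → Ω → V) (k : ℕ) (ω : Ω) : ℝ :=
  Γ * ∑ i ∈ Finset.Icc 1 (stopTime X k ω), massBefore π X i ω


/-!
Write `R_t` for the number of repeats among the first `t` draws and `S_t = ∑_{i ≤ t} P i`.
Given the first `i - 1` draws, draw `i` is a repeat with probability `P i`, so whenever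
`(1 - P + P e^α) e^{βP} ≤ 1` for all `P ∈ [0, 1]`, the stopped process
`exp (α R_{T ∧ t} + β S_{T ∧ t})` is a supermartingale. As `T ≤ k + |V|` surely, evaluating
it at that horizon gives `E[exp (α k + β S_T)] ≤ 1`; with `α = -log (1 + θ)`,
`β = θ / (1 + θ)`, Markov's inequality gives
`Pr[θ (S_T - (1 + θ) k) ≥ 0] ≤ exp (-k (θ - log (1 + θ)))`. Since `Γ̂ = Γ S_T / k`, the two
tails of `Γ̂` are the cases `θ = ± ε`, and `θ - log (1 + θ) ≥ ε² / (2 + 4.4 ε)` makes each of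
them at most `δ / 3`.
-/

open Real (exp log)

section Draws

variable {V Ω : Type*} [DecidableEq V] (X : ℕ → Ω → V) (ω : Ω)

lemma drawnSet_succ {i : ℕ} (hi : 1 ≤ i) :
    drawnSet X (i + 1) ω = insert (X i ω) (drawnSet X i ω) := by
  have h : Icc 1 (i + 1 - 1) = insert i (Icc 1 (i - 1)) := by
    ext j; simp only [mem_Icc, mem_insert]; omega
  rw [drawnSet, h, image_insert, drawnSet]

lemma repeatCount_eq_sum (i : ℕ) :
    repeatCount X i ω = ∑ j ∈ Icc 1 i, if X j ω ∈ drawnSet X j ω then 1 else 0 := by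
  rw [repeatCount, sum_boole, Nat.cast_id]

lemma repeatCount_zero : repeatCount X 0 ω = 0 := by
  simp [repeatCount]

lemma repeatCount_succ (i : ℕ) :
    repeatCount X (i + 1) ω =
      repeatCount X i ω + if X (i + 1) ω ∈ drawnSet X (i + 1) ω then 1 else 0 := by
  rw [repeatCount_eq_sum, repeatCount_eq_sum, sum_Icc_succ_top (by omega)]

lemma repeatCount_succ_le (i : ℕ) : repeatCount X (i + 1) ω ≤ repeatCount X i ω + 1 := by
  rw [repeatCount_succ]; split <;> omega

lemma repeatCount_monotone : Monotone (repeatCount X · ω) :=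
  monotone_nat_of_le_succ fun i => by rw [repeatCount_succ]; omega

lemma card_drawnSet_succ_add_repeatCount (i : ℕ) :
    #(drawnSet X (i + 1) ω) + repeatCount X i ω = i := by
  induction i with
  | zero => simp [drawnSet, repeatCount_zero]
  | succ i ih =>
    rw [drawnSet_succ X ω (by omega), repeatCount_succ]
    by_cases h : X (i + 1) ω ∈ drawnSet X (i + 1) ω
    · rw [if_pos h, insert_eq_of_mem h]; omega
    · rw [if_neg h, card_insert_of_notMem h]; omega

variable [Fintype V] {k : ℕ} (hk : 1 ≤ k)
include hk

lemma exists_repeatCount_eq :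
    ∃ i, 1 ≤ i ∧ i ≤ k + Fintype.card V ∧ repeatCount X i ω = k := by
  have hreach : k ≤ repeatCount X (k + Fintype.card V) ω := by
    have := card_drawnSet_succ_add_repeatCount X ω (k + Fintype.card V)
    have := card_le_univ (drawnSet X (k + Fintype.card V + 1) ω)
    omega
  have hex : ∃ i, k ≤ repeatCount X i ω := ⟨_, hreach⟩
  have hm : k ≤ repeatCount X (Nat.find hex) ω := Nat.find_spec hex
  have hm0 : Nat.find hex ≠ 0 := by
    intro h; rw [h, repeatCount_zero] at hm; omega
  have hprev : repeatCount X (Nat.find hex - 1) ω < k :=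
    not_le.1 (Nat.find_min hex (by omega))
  have hstep := repeatCount_succ_le X ω (Nat.find hex - 1)
  rw [Nat.sub_add_cancel (by omega)] at hstep
  exact ⟨Nat.find hex, by omega, Nat.find_min' hex hreach, by omega⟩

lemma stopTime_mem :
    1 ≤ stopTime X k ω ∧ repeatCount X (stopTime X k ω) ω = k := by
  obtain ⟨i, hi1, -, hik⟩ := exists_repeatCount_eq X ω hk
  exact Nat.sInf_mem (s := {i | 1 ≤ i ∧ repeatCount X i ω = k}) ⟨i, hi1, hik⟩

lemma stopTime_le : stopTime X k ω ≤ k + Fintype.card V := by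
  obtain ⟨i, hi1, hik, hi⟩ := exists_repeatCount_eq X ω hk
  exact (Nat.sInf_le (s := {i | 1 ≤ i ∧ repeatCount X i ω = k}) ⟨hi1, hi⟩).trans hik

lemma repeatCount_pred_lt_iff_le_stopTime {i : ℕ} (hi : 1 ≤ i) :
    repeatCount X (i - 1) ω < k ↔ i ≤ stopTime X k ω := by
  obtain ⟨hT1, hTk⟩ := stopTime_mem X ω hk
  have hpred : repeatCount X (stopTime X k ω - 1) ω < k := by
    refine lt_of_le_of_ne ((repeatCount_monotone X ω (Nat.sub_le _ 1)).trans hTk.le) fun h => ?_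
    rcases Nat.eq_zero_or_pos (stopTime X k ω - 1) with h0 | h0
    · rw [h0, repeatCount_zero] at h; omega
    · have := Nat.sInf_le (s := {i | 1 ≤ i ∧ repeatCount X i ω = k}) ⟨h0, h⟩
      exact absurd this (by change ¬stopTime X k ω ≤ _; omega)
  constructor
  · intro h
    by_contra hlt
    have : k ≤ repeatCount X (i - 1) ω :=
      hTk ▸ repeatCount_monotone X ω (show stopTime X k ω ≤ i - 1 by omega)
    omega
  · intro h
    exact (repeatCount_monotone X ω (Nat.sub_le_sub_right h 1)).trans_lt hpred

end Draws

section Congr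

variable {V Ω Ω' : Type*} [DecidableEq V] {X : ℕ → Ω → V} {Y : ℕ → Ω' → V} {ω : Ω} {ω' : Ω'}
  {t : ℕ} (h : Set.EqOn (X · ω) (Y · ω') (Set.Icc 1 t))
include h

lemma drawnSet_congr {i : ℕ} (hi : i ≤ t + 1) : drawnSet X i ω = drawnSet Y i ω' :=
  image_congr fun j hj => by
    rw [coe_Icc, Set.mem_Icc] at hj
    exact h ⟨hj.1, by omega⟩

lemma repeatCount_congr {i : ℕ} (hi : i ≤ t) : repeatCount X i ω = repeatCount Y i ω' := by
  unfold repeatCount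
  congr 1
  refine filter_congr fun j hj => ?_
  rw [mem_Icc] at hj
  rw [show X j ω = Y j ω' from h ⟨hj.1, by omega⟩, drawnSet_congr h (by omega)]

lemma massBefore_congr (π : V → ℝ) {i : ℕ} (hi : i ≤ t + 1) :
    massBefore π X i ω = massBefore π Y i ω' := by
  rw [massBefore, massBefore, drawnSet_congr h hi]

lemma stopTime_congr [Fintype V] {k : ℕ} (hk : 1 ≤ k) (ht : k + Fintype.card V ≤ t) :
    stopTime X k ω = stopTime Y k ω' := by
  have key : ∀ i, 1 ≤ i → i ≤ k + Fintype.card V → (i ≤ stopTime X k ω ↔ i ≤ stopTime Y k ω') :=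
    fun i hi1 hi2 => by
      rw [← repeatCount_pred_lt_iff_le_stopTime X ω hk hi1,
        ← repeatCount_pred_lt_iff_le_stopTime Y ω' hk hi1, repeatCount_congr h (by omega)]
  have hX := (stopTime_mem X ω hk).1
  have hY := (stopTime_mem Y ω' hk).1
  exact le_antisymm ((key _ hX (stopTime_le X ω hk)).1 le_rfl)
    ((key _ hY (stopTime_le Y ω' hk)).2 le_rfl)

end Congr

section Stopped

variable {V Ω : Type*} [DecidableEq V]

noncomputable def stoppedMass (π : V → ℝ) (X : ℕ → Ω → V) (k : ℕ) (ω : Ω) : ℝ :=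
  ∑ i ∈ Icc 1 (stopTime X k ω), massBefore π X i ω

/-- `∑_{i ∈ [1, t]} stoppedIncrement … i ω` is `α R_{T ∧ t} + β S_{T ∧ t}`. The guard
`repeatCount X (i - 1) ω < k` says `i ≤ T` (`repeatCount_pred_lt_iff_le_stopTime`) in terms of
the draws before `i` only. -/
def stoppedIncrement (π : V → ℝ) (α β : ℝ) (X : ℕ → Ω → V) (k i : ℕ) (ω : Ω) : ℝ :=
  if repeatCount X (i - 1) ω < k then
    (if X i ω ∈ drawnSet X i ω then α else 0) + β * massBefore π X i ω
  else 0

lemma sum_stoppedIncrement_eq [Fintype V] (π : V → ℝ) (α β : ℝ) (X : ℕ → Ω → V) {k t : ℕ}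
    (ω : Ω) (hk : 1 ≤ k) (ht : stopTime X k ω ≤ t) :
    ∑ i ∈ Icc 1 t, stoppedIncrement π α β X k i ω = α * k + β * stoppedMass π X k ω := by
  have hfilter : {i ∈ Icc 1 t | repeatCount X (i - 1) ω < k} = Icc 1 (stopTime X k ω) := by
    ext i
    rw [mem_filter, mem_Icc, mem_Icc]
    constructor
    · rintro ⟨⟨hi1, -⟩, hi⟩
      exact ⟨hi1, (repeatCount_pred_lt_iff_le_stopTime X ω hk hi1).1 hi⟩
    · rintro ⟨hi1, hi⟩
      exact ⟨⟨hi1, hi.trans ht⟩, (repeatCount_pred_lt_iff_le_stopTime X ω hk hi1).2 hi⟩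
  have hrepeats : ∑ i ∈ Icc 1 (stopTime X k ω), (if X i ω ∈ drawnSet X i ω then α else 0)
      = k * α := by
    rw [sum_ite, sum_const_zero, add_zero, sum_const, nsmul_eq_mul, ← repeatCount,
      (stopTime_mem X ω hk).2]
  simp only [stoppedIncrement]
  rw [← sum_filter, hfilter, sum_add_distrib, hrepeats, ← mul_sum, stoppedMass, mul_comm]

lemma massBefore_nonneg {π : V → ℝ} (hπ0 : ∀ u, 0 ≤ π u) (X : ℕ → Ω → V) (i : ℕ) (ω : Ω) :
    0 ≤ massBefore π X i ω :=
  sum_nonneg fun u _ => hπ0 u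

lemma massBefore_le_one [Fintype V] {π : V → ℝ} (hπ0 : ∀ u, 0 ≤ π u) (hπ1 : ∑ u, π u = 1)
    (X : ℕ → Ω → V) (i : ℕ) (ω : Ω) : massBefore π X i ω ≤ 1 :=
  hπ1 ▸ sum_le_univ_sum_of_nonneg hπ0

lemma stoppedIncrement_congr {Ω' : Type*} {π : V → ℝ} (α β : ℝ) {X : ℕ → Ω → V} {Y : ℕ → Ω' → V}
    {ω : Ω} {ω' : Ω'} {t : ℕ} (h : Set.EqOn (X · ω) (Y · ω') (Set.Icc 1 t)) (k : ℕ) {i : ℕ}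
    (hi : i ∈ Icc 1 t) :
    stoppedIncrement π α β X k i ω = stoppedIncrement π α β Y k i ω' := by
  rw [mem_Icc] at hi
  simp only [stoppedIncrement, repeatCount_congr h (show i - 1 ≤ t by omega),
    drawnSet_congr h (show i ≤ t + 1 by omega), massBefore_congr h π (show i ≤ t + 1 by omega),
    show X i ω = Y i ω' from h hi]

lemma stoppedMass_congr [Fintype V] {Ω' : Type*} (π : V → ℝ)
    {X : ℕ → Ω → V} {Y : ℕ → Ω' → V} {ω : Ω} {ω' : Ω'} {t : ℕ}
    (h : Set.EqOn (X · ω) (Y · ω') (Set.Icc 1 t)) {k : ℕ} (hk : 1 ≤ k)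
    (ht : k + Fintype.card V ≤ t) :
    stoppedMass π X k ω = stoppedMass π Y k ω' := by
  rw [stoppedMass, stoppedMass, ← stopTime_congr h hk ht]
  refine sum_congr rfl fun i hi => massBefore_congr h π ?_
  have := stopTime_le X ω hk
  have := (mem_Icc.1 hi).2
  omega

end Stopped

section PathSpace

variable {V : Type*} [Nonempty V]

noncomputable def pathCoord {n : ℕ} (j : ℕ) (v : Fin n → V) : V :=
  if h : j - 1 < n then v ⟨j - 1, h⟩ else Classical.arbitrary V

def firstDraws {Ω : Type*} (n : ℕ) (X : ℕ → Ω → V) (ω : Ω) : Fin n → V :=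
  fun i => X (i + 1) ω

lemma eqOn_pathCoord_firstDraws {Ω : Type*} (n : ℕ) (X : ℕ → Ω → V) (ω : Ω) :
    Set.EqOn (pathCoord · (firstDraws n X ω)) (X · ω) (Set.Icc 1 n) := by
  intro j ⟨hj1, hjn⟩
  simp only [pathCoord, dif_pos (show j - 1 < n by omega), firstDraws, Nat.sub_add_cancel hj1]

lemma eqOn_pathCoord_snoc {t : ℕ} (w : Fin t → V) (u : V) :
    Set.EqOn (pathCoord · (Fin.snoc w u : Fin (t + 1) → V)) (pathCoord · w) (Set.Icc 1 t) := by
  intro j ⟨hj1, hjt⟩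
  have hj : j - 1 < t := by omega
  simp only [pathCoord, dif_pos hj, dif_pos (show j - 1 < t + 1 by omega)]
  exact Fin.snoc_castSucc (α := fun _ => V) (i := ⟨j - 1, hj⟩) ..

lemma pathCoord_snoc_last {t : ℕ} (w : Fin t → V) (u : V) :
    pathCoord (t + 1) (Fin.snoc w u : Fin (t + 1) → V) = u := by
  simp only [pathCoord, Nat.add_sub_cancel, dif_pos (Nat.lt_succ_self t)]
  exact Fin.snoc_last (α := fun _ => V) ..

lemma stoppedMass_eq_stoppedMass_firstDraws [Fintype V] [DecidableEq V] {Ω : Type*}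
    {π : V → ℝ} {X : ℕ → Ω → V} {k : ℕ} (hk : 1 ≤ k) (ω : Ω) :
    stoppedMass π X k ω = stoppedMass π pathCoord k (firstDraws (k + Fintype.card V) X ω) :=
  stoppedMass_congr π (eqOn_pathCoord_firstDraws _ X ω).symm hk le_rfl

end PathSpace

lemma sum_pi_fin_succ {α M : Type*} [Fintype α] [AddCommMonoid M] (t : ℕ)
    (f : (Fin (t + 1) → α) → M) : ∑ v, f v = ∑ w : Fin t → α, ∑ u, f (Fin.snoc w u) := by
  rw [← (Fin.snocEquiv fun _ => α).sum_comp, Fintype.sum_prod_type, sum_comm]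
  rfl

section Supermartingale

variable {V : Type*} [Fintype V] [DecidableEq V] {π : V → ℝ}

lemma sum_mul_exp_ite_mem (hπ1 : ∑ u, π u = 1) (D : Finset V) (α : ℝ) :
    ∑ u, π u * exp (if u ∈ D then α else 0) = 1 - ∑ u ∈ D, π u + (∑ u ∈ D, π u) * exp α := by
  have h : ∀ u, π u * exp (if u ∈ D then α else 0) =
      π u + if u ∈ D then π u * (exp α - 1) else 0 := fun u => by
    split_ifs
    · ring
    · simp
  rw [sum_congr rfl fun u _ => h u, sum_add_distrib, sum_ite_mem, univ_inter, ← sum_mul, hπ1]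
  ring

variable [Nonempty V] (hπ0 : ∀ u, 0 ≤ π u) (hπ1 : ∑ u, π u = 1) {α β : ℝ}
  (hαβ : ∀ P, 0 ≤ P → P ≤ 1 → (1 - P + P * exp α) * exp (β * P) ≤ 1)
include hπ0 hπ1 hαβ

lemma sum_mul_exp_stoppedIncrement_snoc_le_one (k : ℕ) {t : ℕ} (w : Fin t → V) :
    ∑ u, π u * exp (stoppedIncrement π α β pathCoord k (t + 1) (Fin.snoc w u : Fin (t + 1) → V))
      ≤ 1 := by
  set D := drawnSet pathCoord (t + 1) w
  set P := massBefore π pathCoord (t + 1) w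
  have hinc : ∀ u, stoppedIncrement π α β pathCoord k (t + 1) (Fin.snoc w u : Fin (t + 1) → V)
      = if repeatCount pathCoord t w < k then (if u ∈ D then α else 0) + β * P else 0 := by
    intro u
    have h := eqOn_pathCoord_snoc w u
    simp only [stoppedIncrement, Nat.add_sub_cancel, repeatCount_congr h le_rfl,
      drawnSet_congr h le_rfl, massBefore_congr h π le_rfl, pathCoord_snoc_last, D, P]
  simp only [hinc]
  split_ifs
  · simp only [Real.exp_add, ← mul_assoc, ← sum_mul, sum_mul_exp_ite_mem hπ1]
    exact hαβ P (massBefore_nonneg hπ0 ..) (massBefore_le_one hπ0 hπ1 ..)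
  · simp [hπ1]

theorem sum_prod_mul_exp_sum_stoppedIncrement_le_one (k t : ℕ) :
    ∑ v : Fin t → V, (∏ i, π (v i)) * exp (∑ i ∈ Icc 1 t, stoppedIncrement π α β pathCoord k i v)
      ≤ 1 := by
  induction t with
  | zero => simp
  | succ t ih =>
    rw [sum_pi_fin_succ]
    calc _ = ∑ w : Fin t → V, (∏ i, π (w i)) *
            exp (∑ i ∈ Icc 1 t, stoppedIncrement π α β pathCoord k i w) *
            ∑ u, π u * exp (stoppedIncrement π α β pathCoord k (t + 1)
              (Fin.snoc w u : Fin (t + 1) → V)) := by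
          refine sum_congr rfl fun w _ => ?_
          rw [mul_sum]
          refine sum_congr rfl fun u _ => ?_
          rw [Fin.prod_univ_castSucc, sum_Icc_succ_top (by omega), Real.exp_add,
            sum_congr rfl fun i hi =>
              stoppedIncrement_congr α β (eqOn_pathCoord_snoc w u) k hi]
          simp only [Fin.snoc_castSucc, Fin.snoc_last]
          ring
      _ ≤ ∑ w : Fin t → V, (∏ i, π (w i)) *
            exp (∑ i ∈ Icc 1 t, stoppedIncrement π α β pathCoord k i w) * 1 := by
          gcongr with w
          · exact mul_nonneg (prod_nonneg fun i _ => hπ0 _) (Real.exp_pos _).le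
          · exact sum_mul_exp_stoppedIncrement_snoc_le_one hπ0 hπ1 hαβ k w
      _ ≤ 1 := by simpa using ih

end Supermartingale

open scoped ENNReal

section Probability

variable {V Ω : Type*} [MeasurableSpace V] {mΩ : MeasurableSpace Ω} {μ : Measure Ω}
  {π : V → ℝ} {X : ℕ → Ω → V}

lemma measurable_firstDraws (hXmeas : ∀ i, Measurable (X i)) (n : ℕ) :
    Measurable (firstDraws n X) :=
  measurable_pi_lambda _ fun _ => hXmeas _

variable [MeasurableSingletonClass V]

lemma measure_firstDraws_preimage_singleton (hπ0 : ∀ u, 0 ≤ π u) (hindep : iIndepFun X μ)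
    (hlaw : ∀ i : ℕ, 1 ≤ i → ∀ u : V, μ (X i ⁻¹' {u}) = ENNReal.ofReal (π u))
    {n : ℕ} (v : Fin n → V) :
    μ (firstDraws n X ⁻¹' {v}) = ENNReal.ofReal (∏ i, π (v i)) := by
  have hset : firstDraws n X ⁻¹' {v} = ⋂ i ∈ (univ : Finset (Fin n)), X (i + 1) ⁻¹' {v i} := by
    ext ω
    simp [firstDraws, funext_iff]
  have hindep' : iIndepFun (fun i : Fin n => X (i + 1)) μ :=
    hindep.precomp fun i j hij => Fin.ext (by simpa using hij)
  rw [hset, hindep'.measure_inter_preimage_eq_mul _ fun _ _ => measurableSet_singleton _,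
    ENNReal.ofReal_prod_of_nonneg fun _ _ => hπ0 _]
  exact prod_congr rfl fun i _ => hlaw _ (by omega) _

lemma lintegral_comp_firstDraws [Fintype V] (hπ0 : ∀ u, 0 ≤ π u) (hXmeas : ∀ i, Measurable (X i))
    (hindep : iIndepFun X μ)
    (hlaw : ∀ i : ℕ, 1 ≤ i → ∀ u : V, μ (X i ⁻¹' {u}) = ENNReal.ofReal (π u))
    {n : ℕ} (g : (Fin n → V) → ℝ≥0∞) :
    ∫⁻ ω, g (firstDraws n X ω) ∂μ = ∑ v, g v * ENNReal.ofReal (∏ i, π (v i)) := by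
  rw [← lintegral_map (measurable_of_countable g) (measurable_firstDraws hXmeas n),
    lintegral_fintype]
  simp_rw [Measure.map_apply (measurable_firstDraws hXmeas n) (measurableSet_singleton _),
    measure_firstDraws_preimage_singleton hπ0 hindep hlaw]

variable [Fintype V] [DecidableEq V] [Nonempty V] {k : ℕ}

lemma measurable_stoppedMass (hXmeas : ∀ i, Measurable (X i)) (hk : 1 ≤ k) :
    Measurable (stoppedMass π X k) := by
  rw [funext (stoppedMass_eq_stoppedMass_firstDraws hk)]
  exact (measurable_of_countable (stoppedMass π pathCoord k)).comp (measurable_firstDraws hXmeas _)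

theorem lintegral_exp_stoppedMass_le_one (hπ0 : ∀ u, 0 ≤ π u) (hπ1 : ∑ u, π u = 1)
    (hXmeas : ∀ i, Measurable (X i)) (hindep : iIndepFun X μ)
    (hlaw : ∀ i : ℕ, 1 ≤ i → ∀ u : V, μ (X i ⁻¹' {u}) = ENNReal.ofReal (π u))
    {α β : ℝ} (hαβ : ∀ P, 0 ≤ P → P ≤ 1 → (1 - P + P * exp α) * exp (β * P) ≤ 1)
    (hk : 1 ≤ k) :
    ∫⁻ ω, ENNReal.ofReal (exp (α * k + β * stoppedMass π X k ω)) ∂μ ≤ 1 := by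
  set n := k + Fintype.card V
  set Z : (Fin n → V) → ℝ := fun v => ∑ i ∈ Icc 1 n, stoppedIncrement π α β pathCoord k i v
  have hfactor : ∀ ω, α * k + β * stoppedMass π X k ω = Z (firstDraws n X ω) := fun ω => by
    rw [stoppedMass_eq_stoppedMass_firstDraws hk]
    exact (sum_stoppedIncrement_eq π α β pathCoord _ hk (stopTime_le _ _ hk)).symm
  simp only [hfactor]
  rw [lintegral_comp_firstDraws hπ0 hXmeas hindep hlaw (fun v => ENNReal.ofReal (exp (Z v))),
    ← ENNReal.ofReal_one]
  simp_rw [← ENNReal.ofReal_mul (Real.exp_pos _).le]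
  rw [← ENNReal.ofReal_sum_of_nonneg fun v _ =>
    mul_nonneg (Real.exp_pos _).le (prod_nonneg fun i _ => hπ0 _)]
  refine ENNReal.ofReal_le_ofReal ?_
  simpa only [mul_comm] using sum_prod_mul_exp_sum_stoppedIncrement_le_one hπ0 hπ1 hαβ k _

end Probability

lemma one_sub_add_mul_exp_neg_log_mul_exp_le_one {θ : ℝ} (hθ : -1 < θ) (P : ℝ) :
    (1 - P + P * exp (-log (1 + θ))) * exp (θ / (1 + θ) * P) ≤ 1 := by
  have h1θ : 1 + θ ≠ 0 := by linarith
  have hlin : 1 - P + P * exp (-log (1 + θ)) = 1 - θ / (1 + θ) * P := by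
    rw [Real.exp_neg, Real.exp_log (by linarith)]
    field_simp
    ring
  calc (1 - P + P * exp (-log (1 + θ))) * exp (θ / (1 + θ) * P)
      ≤ exp (-(θ / (1 + θ) * P)) * exp (θ / (1 + θ) * P) := by
        rw [hlin]
        exact mul_le_mul_of_nonneg_right (Real.one_sub_le_exp_neg _) (Real.exp_pos _).le
    _ = 1 := by rw [← Real.exp_add, neg_add_cancel, Real.exp_zero]

theorem measure_stoppedMass_tail_le {V Ω : Type*} [Fintype V] [DecidableEq V] [Nonempty V]
    [MeasurableSpace V] [MeasurableSingletonClass V] {mΩ : MeasurableSpace Ω} {μ : Measure Ω}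
    {π : V → ℝ} {X : ℕ → Ω → V} (hπ0 : ∀ u, 0 ≤ π u) (hπ1 : ∑ u, π u = 1)
    (hXmeas : ∀ i, Measurable (X i)) (hindep : iIndepFun X μ)
    (hlaw : ∀ i : ℕ, 1 ≤ i → ∀ u : V, μ (X i ⁻¹' {u}) = ENNReal.ofReal (π u))
    {k : ℕ} (hk : 1 ≤ k) {θ : ℝ} (hθ : -1 < θ) :
    μ {ω | 0 ≤ θ * (stoppedMass π X k ω - (1 + θ) * k)}
      ≤ ENNReal.ofReal (exp (-(k * (θ - log (1 + θ))))) := by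
  have h1θ : 0 < 1 + θ := by linarith
  set α := -log (1 + θ)
  set β := θ / (1 + θ)
  have hαβ : ∀ P, 0 ≤ P → P ≤ 1 → (1 - P + P * exp α) * exp (β * P) ≤ 1 :=
    fun P _ _ => one_sub_add_mul_exp_neg_log_mul_exp_le_one hθ P
  set c := k * (θ - log (1 + θ))
  have hsub : {ω | 0 ≤ θ * (stoppedMass π X k ω - (1 + θ) * k)} ⊆
      {ω | ENNReal.ofReal (exp c) ≤ ENNReal.ofReal (exp (α * k + β * stoppedMass π X k ω))} := by
    intro ω hω
    refine ENNReal.ofReal_le_ofReal (Real.exp_le_exp.2 ?_)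
    have hgap : α * k + β * stoppedMass π X k ω - c
        = θ * (stoppedMass π X k ω - (1 + θ) * k) / (1 + θ) := by
      simp only [α, β, c]
      field_simp
      ring
    have := div_nonneg hω h1θ.le
    linarith
  have hmeas : Measurable fun ω => ENNReal.ofReal (exp (α * k + β * stoppedMass π X k ω)) :=
    (((measurable_stoppedMass hXmeas hk).const_mul β).const_add _).exp.ennreal_ofReal
  calc μ _ ≤ μ _ := measure_mono hsub
    _ ≤ (∫⁻ ω, ENNReal.ofReal (exp (α * k + β * stoppedMass π X k ω)) ∂μ)
          / ENNReal.ofReal (exp c) :=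
        meas_ge_le_lintegral_div hmeas.aemeasurable
          (ENNReal.ofReal_pos.2 (Real.exp_pos c)).ne' ENNReal.ofReal_ne_top
    _ ≤ 1 / ENNReal.ofReal (exp c) := by
        gcongr
        exact lintegral_exp_stoppedMass_le_one hπ0 hπ1 hXmeas hindep hlaw hαβ hk
    _ = ENNReal.ofReal (exp (-c)) := by
        rw [one_div, ← ENNReal.ofReal_inv_of_pos (Real.exp_pos c), Real.exp_neg]

lemma log_le_sub_inv_div_two {s : ℝ} (hs : 1 ≤ s) : log s ≤ (s - s⁻¹) / 2 := by
  have h := Real.self_le_sinh_iff.2 (Real.log_nonneg hs)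
  rwa [Real.sinh_eq, Real.exp_neg, Real.exp_log (by linarith)] at h

lemma add_sq_div_two_le_neg_log_one_sub {x : ℝ} (h0 : 0 ≤ x) (h1 : x < 1) :
    x + x ^ 2 / 2 ≤ -log (1 - x) := by
  have h := sum_le_hasSum (range 2) (fun n _ => by positivity)
    (Real.hasSum_pow_div_log_of_abs_lt_one (abs_lt.2 ⟨by linarith, h1⟩))
  norm_num [sum_range_succ] at h
  linarith

lemma sq_div_le_sub_log_one_add {θ : ℝ} (hθ : -1 < θ) :
    θ ^ 2 / (2 * (1 + |θ|)) ≤ θ - log (1 + θ) := by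
  rcases le_total 0 θ with h | h
  · have hlog := log_le_sub_inv_div_two (show 1 ≤ 1 + θ by linarith)
    have hid : θ - ((1 + θ) - (1 + θ)⁻¹) / 2 = θ ^ 2 / (2 * (1 + θ)) := by
      field_simp
      ring
    rw [abs_of_nonneg h]
    linarith
  · have hlog := add_sq_div_two_le_neg_log_one_sub (x := -θ) (by linarith) (by linarith)
    rw [sub_neg_eq_add] at hlog
    have hle : θ ^ 2 / (2 * (1 + |θ|)) ≤ θ ^ 2 / 2 :=
      div_le_div_of_nonneg_left (sq_nonneg θ) (by norm_num) (by linarith [abs_nonneg θ])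
    nlinarith

lemma exp_neg_mul_sub_log_one_add_le {ε δ θ : ℝ} {k : ℕ} (hε0 : 0 < ε) (hε1 : ε < 1)
    (hθ : |θ| = ε) (hδ0 : 0 < δ) (hδ3 : δ ≤ 3)
    (hk : (2 + 4.4 * ε) / ε ^ 2 * log (3 / δ) ≤ k) :
    exp (-(k * (θ - log (1 + θ)))) ≤ δ / 3 := by
  have hθ1 : -1 < θ := by linarith [neg_abs_le θ]
  have hL : 0 ≤ log (3 / δ) := Real.log_nonneg (by rw [le_div_iff₀ hδ0]; linarith)
  have hrate := sq_div_le_sub_log_one_add hθ1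
  rw [← sq_abs, hθ] at hrate
  have hkc : log (3 / δ) ≤ k * (θ - log (1 + θ)) :=
    calc log (3 / δ)
        ≤ (2 + 4.4 * ε) / (2 + 2 * ε) * log (3 / δ) :=
          le_mul_of_one_le_left hL (by rw [one_le_div (by linarith)]; linarith)
      _ = (2 + 4.4 * ε) / ε ^ 2 * log (3 / δ) * (ε ^ 2 / (2 * (1 + ε))) := by
          field_simp
      _ ≤ k * (θ - log (1 + θ)) := mul_le_mul hk hrate (by positivity) (by positivity)
  calc exp (-(k * (θ - log (1 + θ)))) ≤ exp (-log (3 / δ)) := Real.exp_le_exp.2 (by linarith)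
    _ = δ / 3 := by rw [Real.exp_neg, Real.exp_log (by positivity), inv_div]

lemma zero_le_mul_sub_or_of_le_abs_mul_div_sub {Γ s κ ε : ℝ} (hΓ : 0 < Γ) (hκ : 0 < κ)
    (hε : 0 ≤ ε) (h : ε * Γ ≤ |Γ * s / κ - Γ|) :
    0 ≤ ε * (s - (1 + ε) * κ) ∨ 0 ≤ -ε * (s - (1 + -ε) * κ) := by
  have hrel : Γ * s / κ - Γ = Γ / κ * (s - κ) := by field_simp
  rw [hrel, abs_mul, abs_of_pos (div_pos hΓ hκ), div_mul_eq_mul_div, le_div_iff₀ hκ] at h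
  have hdev : ε * κ ≤ |s - κ| := le_of_mul_le_mul_left (by linarith) hΓ
  rcases le_abs'.1 hdev with h | h
  · exact Or.inr (by nlinarith)
  · exact Or.inl (by nlinarith)

lemma sumApproxW_eq_mul_stoppedMass {V Ω : Type*} [DecidableEq V] (Γ : ℝ) (π : V → ℝ)
    (X : ℕ → Ω → V) (k : ℕ) (ω : Ω) :
    sumApproxW Γ π X k ω = Γ * stoppedMass π X k ω :=
  rfl

theorem sumApprox_accuracy_general
    {V : Type*} [Fintype V] [DecidableEq V] [MeasurableSpace V] [MeasurableSingletonClass V]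
    {Ω : Type*} {mΩ : MeasurableSpace Ω} {μ : Measure Ω}
    (γ : V → ℝ) (hγ0 : ∀ u, 0 ≤ γ u) (hγpos : 0 < ∑ u, γ u)
    (π : V → ℝ) (hπ : ∀ u, π u = γ u / ∑ u', γ u')
    (X : ℕ → Ω → V) (hXmeas : ∀ i, Measurable (X i))
    (hindep : iIndepFun X μ)
    (hlaw : ∀ i : ℕ, 1 ≤ i → ∀ u : V, μ (X i ⁻¹' {u}) = ENNReal.ofReal (π u))
    (ε δ : ℝ) (hε : ε ∈ Set.Ioo (0 : ℝ) 1) (hδ : δ ∈ Set.Ioo (0 : ℝ) 1)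
    (k : ℕ) (hk : k = ⌈(2 + 4.4 * ε) / ε ^ 2 * Real.log (3 / δ)⌉₊) :
    μ {ω | ε * ∑ u, γ u ≤
        |sumApproxW (∑ u, γ u) π X k ω / k - ∑ u, γ u|}
      ≤ ENNReal.ofReal (2 * δ / 3) := by
  obtain ⟨hε0, hε1⟩ := hε
  obtain ⟨hδ0, hδ1⟩ := hδ
  have : Nonempty V := univ_nonempty_iff.1 (nonempty_of_sum_ne_zero hγpos.ne')
  set Γ := ∑ u, γ u
  have hπ0 : ∀ u, 0 ≤ π u := fun u => hπ u ▸ div_nonneg (hγ0 u) hγpos.le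
  have hπ1 : ∑ u, π u = 1 := by
    rw [sum_congr rfl fun u _ => hπ u, ← sum_div, div_self hγpos.ne']
  have hkL : (2 + 4.4 * ε) / ε ^ 2 * log (3 / δ) ≤ k := hk ▸ Nat.le_ceil _
  have hk1 : 1 ≤ k := hk ▸ Nat.ceil_pos.2
    (mul_pos (by positivity) (Real.log_pos (by rw [lt_div_iff₀ hδ0]; linarith)))
  have hsub : {ω | ε * Γ ≤ |sumApproxW Γ π X k ω / k - Γ|} ⊆
      {ω | 0 ≤ ε * (stoppedMass π X k ω - (1 + ε) * k)} ∪
        {ω | 0 ≤ -ε * (stoppedMass π X k ω - (1 + -ε) * k)} := fun ω hω =>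
    zero_le_mul_sub_or_of_le_abs_mul_div_sub hγpos (by exact_mod_cast hk1) hε0.le
      (by rwa [← sumApproxW_eq_mul_stoppedMass])
  have htail : ∀ θ, |θ| = ε → μ {ω | 0 ≤ θ * (stoppedMass π X k ω - (1 + θ) * k)}
      ≤ ENNReal.ofReal (δ / 3) := fun θ hθ =>
    (measure_stoppedMass_tail_le hπ0 hπ1 hXmeas hindep hlaw hk1
      (by linarith [neg_abs_le θ])).trans
      (ENNReal.ofReal_le_ofReal (exp_neg_mul_sub_log_one_add_le hε0 hε1 hθ hδ0 (by linarith) hkL))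
  calc μ _ ≤ μ _ := measure_mono hsub
    _ ≤ _ := measure_union_le _ _
    _ ≤ ENNReal.ofReal (δ / 3) + ENNReal.ofReal (δ / 3) :=
        add_le_add (htail ε (abs_of_pos hε0)) (htail (-ε) (by rw [abs_neg, abs_of_pos hε0]))
    _ = ENNReal.ofReal (2 * δ / 3) := by
        rw [← ENNReal.ofReal_add (by positivity) (by positivity)]
        ring_nf

/-- Accuracy of SumApprox (Theorem `thm:sumest_approx`): with i.i.d. draws from
`π = γ / Γ` and threshold `k = ⌈((2+4.4ε)/ε²)·ln(3/δ)⌉`, the estimate `Γ̂ = W/k`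
satisfies `Pr[|Γ̂ - Γ| ≥ εΓ] ≤ 2δ/3`. -/
theorem sumApprox_accuracy
    {V : Type*} [Fintype V] [DecidableEq V] [MeasurableSpace V] [MeasurableSingletonClass V]
    {Ω : Type*} {mΩ : MeasurableSpace Ω} {μ : Measure Ω} [IsProbabilityMeasure μ]
    (γ : V → ℝ) (hγ0 : ∀ u, 0 ≤ γ u) (hγpos : 0 < ∑ u, γ u)
    (π : V → ℝ) (hπ : ∀ u, π u = γ u / ∑ u', γ u')
    (X : ℕ → Ω → V) (hXmeas : ∀ i, Measurable (X i))
    (hindep : iIndepFun X μ)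
    (hlaw : ∀ i : ℕ, 1 ≤ i → ∀ u : V, μ (X i ⁻¹' {u}) = ENNReal.ofReal (π u))
    (ε δ : ℝ) (hε : ε ∈ Set.Ioo (0 : ℝ) 1) (hδ : δ ∈ Set.Ioo (0 : ℝ) 1)
    (k : ℕ) (hk : k = ⌈(2 + 4.4 * ε) / ε ^ 2 * Real.log (3 / δ)⌉₊) :
    μ {ω | ε * ∑ u, γ u ≤
        |sumApproxW (∑ u, γ u) π X k ω / k - ∑ u, γ u|}
      ≤ ENNReal.ofReal (2 * δ / 3) :=
  sumApprox_accuracy_general (mΩ := mΩ) γ hγ0 hγpos π hπ X hXmeas hindep hlaw ε δ hε hδ k hk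
end

section
/- Let π be a probability distribution on a finite set V and let p̄ ∈ (0, 5/18] be such that π(u) ≤ p̄ for all u ∈ V. Let s = ⌈1/p̄⌉. Then Σ_{u∈V} π(u)·(1 − (1 − π(u))^s) ≥ (4/9)·s·Σ_{u∈V} π(u)². (The left-hand side equals the expected total π-mass of the set of distinct elements obtained from s i.i.d. draws from π.) -/
/-!
The inequality holds termwise, even with `1/2` in place of `4/9`. Truncating the
inclusion–exclusion expansion of `(1 - x)^s` after the quadratic term gives
`1 - (1 - x)^s ≥ s x (1 - (s - 1) x / 2)`, and `s = ⌈1/p̄⌉` forces `(s - 1) x ≤ 1`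
whenever `0 ≤ x ≤ p̄`, so that `x (1 - (1 - x)^s) ≥ s x² / 2`.
-/

open Finset

lemma one_sub_pow_le_one_sub_mul_add {x : ℝ} (hx0 : 0 ≤ x) (hx1 : x ≤ 1) (n : ℕ) :
    (1 - x) ^ n ≤ 1 - n * x + n * (n - 1) / 2 * x ^ 2 := by
  induction n with
  | zero => simp
  | succ n ih =>
    have hn : (0 : ℝ) ≤ n * (n - 1) := by
      rcases n.eq_zero_or_pos with rfl | hpos
      · simp
      · have : (1 : ℝ) ≤ n := by exact_mod_cast hpos
        nlinarith
    calc (1 - x) ^ (n + 1) = (1 - x) ^ n * (1 - x) := pow_succ _ _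
      _ ≤ (1 - n * x + n * (n - 1) / 2 * x ^ 2) * (1 - x) :=
        mul_le_mul_of_nonneg_right ih (by linarith)
      _ ≤ 1 - ↑(n + 1) * x + ↑(n + 1) * (↑(n + 1) - 1) / 2 * x ^ 2 := by
        push_cast
        nlinarith [mul_nonneg (mul_nonneg hn hx0) (sq_nonneg x)]

lemma mul_sq_div_two_le_mul_one_sub_one_sub_pow {x : ℝ} {n : ℕ} (hx0 : 0 ≤ x) (hx1 : x ≤ 1)
    (hn : ((n : ℝ) - 1) * x ≤ 1) :
    n * x ^ 2 / 2 ≤ x * (1 - (1 - x) ^ n) := by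
  have hpow := one_sub_pow_le_one_sub_mul_add hx0 hx1 n
  calc (n : ℝ) * x ^ 2 / 2 ≤ n * x ^ 2 * (1 - (n - 1) * x / 2) := by
        nlinarith [mul_nonneg (Nat.cast_nonneg n) (sq_nonneg x)]
    _ = x * (n * x - n * (n - 1) / 2 * x ^ 2) := by ring
    _ ≤ x * (1 - (1 - x) ^ n) := mul_le_mul_of_nonneg_left (by linarith) hx0

lemma natCeil_one_div_sub_one_mul_le_one {p x : ℝ} (hx0 : 0 ≤ x) (hxp : x ≤ p) :
    ((⌈1 / p⌉₊ : ℝ) - 1) * x ≤ 1 := by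
  have hceil : (⌈1 / p⌉₊ : ℝ) - 1 < 1 / p := by
    linarith [Nat.ceil_lt_add_one (one_div_nonneg.2 (hx0.trans hxp))]
  rcases hx0.eq_or_lt with rfl | hx
  · simp
  · calc ((⌈1 / p⌉₊ : ℝ) - 1) * x ≤ 1 / p * x := mul_le_mul_of_nonneg_right hceil.le hx.le
      _ = x / p := one_div_mul_eq_div p x
      _ ≤ 1 := div_le_one_of_le₀ hxp (hx.le.trans hxp)

theorem expected_mass_of_distinct_draws_general
    {V : Type*} [Fintype V]
    (π : V → ℝ) (hπ0 : ∀ u, 0 ≤ π u) (hπ1 : ∑ u, π u = 1)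
    (pbar : ℝ)
    (hbd : ∀ u, π u ≤ pbar)
    (s : ℕ) (hs : s = ⌈1 / pbar⌉₊) :
    (4 / 9 : ℝ) * s * ∑ u, π u ^ 2 ≤ ∑ u, π u * (1 - (1 - π u) ^ s) := by
  rw [mul_sum]
  refine sum_le_sum fun u _ => ?_
  have hu1 : π u ≤ 1 := hπ1 ▸ single_le_sum (fun v _ => hπ0 v) (mem_univ u)
  have hsu : ((s : ℝ) - 1) * π u ≤ 1 := hs ▸ natCeil_one_div_sub_one_mul_le_one (hπ0 u) (hbd u)
  have key := mul_sq_div_two_le_mul_one_sub_one_sub_pow (hπ0 u) hu1 hsu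
  nlinarith [mul_nonneg (Nat.cast_nonneg s : (0 : ℝ) ≤ s) (sq_nonneg (π u))]

/-- If `π` is a probability distribution on a finite set `V` with `π u ≤ p̄ ≤ 5/18` for all
`u` and `s = ⌈1/p̄⌉`, then the expected total `π`-mass of the set of distinct elements
obtained from `s` i.i.d. draws from `π`, namely `∑ u, π u * (1 - (1 - π u)^s)`, is at least
`(4/9) * s * ∑ u, (π u)^2`. -/
theorem expected_mass_of_distinct_draws
    {V : Type*} [Fintype V]
    (π : V → ℝ) (hπ0 : ∀ u, 0 ≤ π u) (hπ1 : ∑ u, π u = 1)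
    (pbar : ℝ) (hp0 : 0 < pbar) (hp1 : pbar ≤ 5 / 18)
    (hbd : ∀ u, π u ≤ pbar)
    (s : ℕ) (hs : s = ⌈1 / pbar⌉₊) :
    (4 / 9 : ℝ) * s * ∑ u, π u ^ 2 ≤ ∑ u, π u * (1 - (1 - π u) ^ s) :=
  expected_mass_of_distinct_draws_general π hπ0 hπ1 pbar hbd s hs
end

section
/- Let V be a finite set with |V| = n, let π be a probability distribution on V, let t ≥ 1 be an integer, and let X_1, …, X_t be V-valued random variables (not necessarily independent) such that each X_i has marginal distribution π. Let N = |{X_1, …, X_t}| be the number of distinct states among them and M = Σ_{u ∈ {X_1, …, X_t}} π(u) their aggregate π-mass. Then for all ε, δ, q > 0: if Pr[N ≥ q] ≥ 1 − δ then Pr[M ≥ εq²/(4tn)] ≥ 1 − ε − δ. -/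
open MeasureTheory Finset

/-!
Call a state light if its mass is below `c = ε q / (2 t n)`. Light states have total mass at most
`n c`, so the expected number of indices `i` with `X i` light is at most `t n c = ε q / 2`, and by
Markov's inequality fewer than `q / 2` of them are light except on an event of probability at most
`ε`. Outside that event and the one where `N < q`, more than `q / 2` of the distinct states are
heavy, so `M ≥ c q / 2 = ε q² / (4 t n)`.
-/

lemma mul_card_image_sub_card_filter_le_sum_image {ι V : Type*} [DecidableEq V]
    (s : Finset ι) (x : ι → V) {π : V → ℝ} (hπ : ∀ u, 0 ≤ π u) {c : ℝ} (hc : 0 ≤ c) :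
    c * ((#(s.image x) : ℝ) - #{i ∈ s | π (x i) < c}) ≤ ∑ u ∈ s.image x, π u := by
  set D := s.image x
  have hlight : #{u ∈ D | π u < c} ≤ #{i ∈ s | π (x i) < c} := by
    rw [filter_image]
    exact card_image_le
  have hsplit := card_filter_add_card_filter_not (s := D) (fun u => π u < c)
  calc c * ((#D : ℝ) - #{i ∈ s | π (x i) < c})
      ≤ c * #{u ∈ D | ¬π u < c} := by
        gcongr
        rw [sub_le_iff_le_add]
        exact_mod_cast hsplit.symm.le.trans (by omega)
    _ = #{u ∈ D | ¬π u < c} • c := by rw [nsmul_eq_mul, mul_comm]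
    _ ≤ ∑ u ∈ D with ¬π u < c, π u :=
        card_nsmul_le_sum _ _ _ fun u hu => not_lt.mp (mem_filter.mp hu).2
    _ ≤ ∑ u ∈ D, π u := sum_le_sum_of_subset_of_nonneg (filter_subset _ _) fun u _ _ => hπ u

lemma mul_meas_card_filter_ge_le_sum_measure {Ω ι : Type*} [MeasurableSpace Ω]
    (μ : Measure Ω) (s : Finset ι) {Q : ι → Ω → Prop} [∀ i, DecidablePred (Q i)]
    (hQ : ∀ i ∈ s, MeasurableSet {ω | Q i ω}) {r : ℝ} :
    ENNReal.ofReal r * μ {ω | r ≤ #{i ∈ s | Q i ω}} ≤ ∑ i ∈ s, μ {ω | Q i ω} := by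
  have hcount : ∀ ω, (#{i ∈ s | Q i ω} : ENNReal) = ∑ i ∈ s, {ω | Q i ω}.indicator 1 ω := by
    intro ω
    simp only [natCast_card_filter, Set.indicator_apply, Set.mem_ofPred_eq, Pi.one_apply]
  have hmeas : ∀ i ∈ s, Measurable ({ω | Q i ω}.indicator (1 : Ω → ENNReal)) :=
    fun i hi => measurable_one.indicator (hQ i hi)
  calc ENNReal.ofReal r * μ {ω | r ≤ #{i ∈ s | Q i ω}}
      ≤ ENNReal.ofReal r * μ {ω | ENNReal.ofReal r ≤ #{i ∈ s | Q i ω}} := by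
        refine mul_le_mul_right (measure_mono fun ω (hω : r ≤ _) => ?_) _
        exact (ENNReal.ofReal_le_ofReal hω).trans_eq (ENNReal.ofReal_natCast _)
    _ ≤ ∫⁻ ω, #{i ∈ s | Q i ω} ∂μ := by
        refine mul_meas_ge_le_lintegral₀ (Measurable.aemeasurable ?_) _
        simp_rw [hcount]
        exact Finset.measurable_sum _ hmeas
    _ = ∑ i ∈ s, μ {ω | Q i ω} := by
        simp_rw [hcount]
        rw [lintegral_finsetSum _ hmeas]
        exact sum_congr rfl fun i hi => lintegral_indicator_one (hQ i hi)

lemma measure_lt_le_ofReal_card_mul {Ω V : Type*} [MeasurableSpace Ω] [Fintype V]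
    [MeasurableSpace V] [MeasurableSingletonClass V] {μ : Measure Ω} {Y : Ω → V}
    (hY : Measurable Y) {π : V → ℝ} (hmarg : ∀ u, μ (Y ⁻¹' {u}) = ENNReal.ofReal (π u)) (c : ℝ) :
    μ {ω | π (Y ω) < c} ≤ ENNReal.ofReal (Fintype.card V * c) := by
  set L : Finset V := {u | π u < c}
  have hL : {ω | π (Y ω) < c} = Y ⁻¹' L := by ext; simp [L]
  calc μ {ω | π (Y ω) < c} = ∑ u ∈ L, ENNReal.ofReal (π u) := by
        rw [hL, ← sum_measure_preimage_singleton _ fun u _ => hY (measurableSet_singleton u)]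
        exact sum_congr rfl fun u _ => hmarg u
    _ ≤ ∑ _u ∈ L, ENNReal.ofReal c :=
        sum_le_sum fun u hu => ENNReal.ofReal_le_ofReal (mem_filter.mp hu).2.le
    _ ≤ Fintype.card V * ENNReal.ofReal c := by
        rw [sum_const, nsmul_eq_mul]
        gcongr
        exact_mod_cast card_le_univ L
    _ = ENNReal.ofReal (Fintype.card V * c) := by
        rw [ENNReal.ofReal_mul (by positivity), ENNReal.ofReal_natCast]

lemma measure_card_filter_lt_ge_le {Ω ι V : Type*} [MeasurableSpace Ω] [Fintype V]
    [MeasurableSpace V] [MeasurableSingletonClass V] {μ : Measure Ω} {s : Finset ι}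
    {X : ι → Ω → V} (hX : ∀ i, Measurable (X i)) {π : V → ℝ}
    (hmarg : ∀ i ∈ s, ∀ u, μ (X i ⁻¹' {u}) = ENNReal.ofReal (π u)) (c : ℝ) {r : ℝ} (hr : 0 < r) :
    μ {ω | r ≤ #{i ∈ s | π (X i ω) < c}} ≤ ENNReal.ofReal (#s * (Fintype.card V * c) / r) := by
  rw [ENNReal.ofReal_div_of_pos hr,
    ENNReal.le_div_iff_mul_le (.inl (by simpa using hr)) (.inl ENNReal.ofReal_ne_top), mul_comm]
  calc ENNReal.ofReal r * μ {ω | r ≤ #{i ∈ s | π (X i ω) < c}}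
      ≤ ∑ i ∈ s, μ {ω | π (X i ω) < c} :=
        mul_meas_card_filter_ge_le_sum_measure μ s
          fun i _ => hX i (Set.toFinite {u | π u < c}).measurableSet
    _ ≤ ∑ _i ∈ s, ENNReal.ofReal (Fintype.card V * c) :=
        sum_le_sum fun i hi => measure_lt_le_ofReal_card_mul (hX i) (hmarg i hi) c
    _ = ENNReal.ofReal (#s * (Fintype.card V * c)) := by
        rw [sum_const, nsmul_eq_mul, ← ENNReal.ofReal_natCast,
          ← ENNReal.ofReal_mul (by positivity)]

theorem mass_of_distinct_states_general
    {V : Type*} [Fintype V] [DecidableEq V] [MeasurableSpace V] [MeasurableSingletonClass V]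
    {Ω : Type*} {mΩ : MeasurableSpace Ω} {μ : Measure Ω}
    (n : ℕ) (hn : Fintype.card V = n)
    (π : V → ℝ) (hπ0 : ∀ u, 0 ≤ π u)
    (t : ℕ)
    (X : ℕ → Ω → V) (hXmeas : ∀ i, Measurable (X i))
    (hmarg : ∀ i ∈ Finset.Icc 1 t, ∀ u : V, μ (X i ⁻¹' {u}) = ENNReal.ofReal (π u))
    (ε δ q : ℝ) (hε : 0 < ε) (hq : 0 < q)
    (hN : ENNReal.ofReal (1 - δ) ≤
      μ {ω | q ≤ (((Finset.Icc 1 t).image fun i => X i ω).card : ℝ)}) :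
    ENNReal.ofReal (1 - ε - δ) ≤
      μ {ω | ε * q ^ 2 / (4 * t * n) ≤ ∑ u ∈ (Finset.Icc 1 t).image fun i => X i ω, π u} := by
  set c := ε * q / (2 * t * n) with hc
  have hc0 : 0 ≤ c := by positivity
  set B : Set Ω := {ω | q / 2 ≤ #{i ∈ Icc 1 t | π (X i ω) < c}}
  have hB : μ B ≤ ENNReal.ofReal ε := by
    refine (measure_card_filter_lt_ge_le hXmeas hmarg c (half_pos hq)).trans
      (ENNReal.ofReal_le_ofReal ?_)
    rw [Nat.card_Icc, add_tsub_cancel_right, hn]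
    calc (t : ℝ) * (n * c) / (q / 2) = ε * (t * n / (t * n)) := by rw [hc]; field_simp
      _ ≤ ε := mul_le_of_le_one_right hε.le (div_self_le_one _)
  have hgood : {ω | q ≤ (((Icc 1 t).image fun i => X i ω).card : ℝ)} \ B ⊆
      {ω | ε * q ^ 2 / (4 * t * n) ≤ ∑ u ∈ (Icc 1 t).image fun i => X i ω, π u} := by
    rintro ω ⟨hA, hnotB⟩
    have hK : (#{i ∈ Icc 1 t | π (X i ω) < c} : ℝ) < q / 2 := not_le.mp hnotB
    calc ε * q ^ 2 / (4 * t * n) = c * (q / 2) := by rw [hc]; ring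
      _ ≤ c * (#((Icc 1 t).image fun i => X i ω) - #{i ∈ Icc 1 t | π (X i ω) < c}) := by
          gcongr
          linarith [show q ≤ _ from hA]
      _ ≤ _ := mul_card_image_sub_card_filter_le_sum_image _ _ hπ0 hc0
  calc ENNReal.ofReal (1 - ε - δ) = ENNReal.ofReal (1 - δ) - ENNReal.ofReal ε := by
        rw [sub_right_comm, ENNReal.ofReal_sub _ hε.le]
    _ ≤ _ - μ B := tsub_le_tsub hN hB
    _ ≤ _ := le_measure_sdiff
    _ ≤ _ := measure_mono hgood

/-- Growth of the aggregate mass of visited states: if `X 1, …, X t` each have marginal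
distribution `π` on a finite set `V` of cardinality `n`, `N` is the number of distinct
states among them and `M` their aggregate `π`-mass, then for all `ε, δ, q > 0`:
`Pr[N ≥ q] ≥ 1 - δ` implies `Pr[M ≥ ε q² / (4 t n)] ≥ 1 - ε - δ`. -/
theorem mass_of_distinct_states
    {V : Type*} [Fintype V] [DecidableEq V] [MeasurableSpace V] [MeasurableSingletonClass V]
    {Ω : Type*} {mΩ : MeasurableSpace Ω} {μ : Measure Ω} [IsProbabilityMeasure μ]
    (n : ℕ) (hn : Fintype.card V = n)
    (π : V → ℝ) (hπ0 : ∀ u, 0 ≤ π u) (hπ1 : ∑ u, π u = 1)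
    (t : ℕ) (ht : 1 ≤ t)
    (X : ℕ → Ω → V) (hXmeas : ∀ i, Measurable (X i))
    (hmarg : ∀ i ∈ Finset.Icc 1 t, ∀ u : V, μ (X i ⁻¹' {u}) = ENNReal.ofReal (π u))
    (ε δ q : ℝ) (hε : 0 < ε) (hδ : 0 < δ) (hq : 0 < q)
    (hN : ENNReal.ofReal (1 - δ) ≤
      μ {ω | q ≤ (((Finset.Icc 1 t).image fun i => X i ω).card : ℝ)}) :
    ENNReal.ofReal (1 - ε - δ) ≤
      μ {ω | ε * q ^ 2 / (4 * t * n) ≤ ∑ u ∈ (Finset.Icc 1 t).image fun i => X i ω, π u} :=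
  mass_of_distinct_states_general (mΩ := mΩ) n hn π hπ0 t X hXmeas hmarg ε δ q hε hq hN
end

section
/- Let n, k be integers with 1 ≤ k and 2k ≤ n, let x ∈ ℝⁿ be given by x_j = 1 for j ≤ k and x_j = √k/n for j > k, let Γ = Σ_{j=1}^n x_j and π = x/Γ. Let X_1, …, X_m be i.i.d. random variables with values in {1, …, n} and law π. Then the probability that some draw lands on an index j > k, or that some two draws coincide, is at most m/√k + m²/k; that is, Pr[(∃ i : X_i > k) or (∃ i < j : X_i = X_j)] ≤ m/√k + m²/k. -/
open MeasureTheory ProbabilityTheory Finset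
open scoped ENNReal

/-!
Every coordinate of `π` is at most `1/k`, since `∑ x ≥ k` and `x ≤ 1`; hence two independent
draws coincide with probability `∑ π u ^ 2 ≤ 1/k`. The `n - k` light coordinates carry total mass
at most `n · (√k/n) / k = 1/√k`. A union bound over the `m` draws and the fewer than `m²` pairs
of draws gives `m/√k + m²/k`.
-/

section Draws

variable {Ω α ι : Type*} {mΩ : MeasurableSpace Ω} {μ : Measure Ω}

lemma measure_preimage_finset_le_ofReal_sum (f : Ω → α) {p : α → ℝ} (hp : ∀ u, 0 ≤ p u)
    (hlaw : ∀ u, μ (f ⁻¹' {u}) = ENNReal.ofReal (p u)) (s : Finset α) :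
    μ (f ⁻¹' s) ≤ ENNReal.ofReal (∑ u ∈ s, p u) := by
  rw [ENNReal.ofReal_sum_of_nonneg fun u _ => hp u, ← Finset.set_biUnion_preimage_singleton]
  exact (measure_biUnion_finset_le s _).trans_eq (Finset.sum_congr rfl fun u _ => hlaw u)

lemma ProbabilityTheory.IndepFun.measure_eq_le_ofReal_sum_sq [Fintype α] [MeasurableSpace α]
    [MeasurableSingletonClass α] {f g : Ω → α} (hfg : f ⟂ᵢ[μ] g) {p : α → ℝ}
    (hp : ∀ u, 0 ≤ p u) (hf : ∀ u, μ (f ⁻¹' {u}) = ENNReal.ofReal (p u))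
    (hg : ∀ u, μ (g ⁻¹' {u}) = ENNReal.ofReal (p u)) :
    μ {ω | f ω = g ω} ≤ ENNReal.ofReal (∑ u, p u ^ 2) := by
  have hunion : {ω | f ω = g ω} = ⋃ u, f ⁻¹' {u} ∩ g ⁻¹' {u} := by
    ext ω; simp [eq_comm]
  have hpair (u : α) : μ (f ⁻¹' {u} ∩ g ⁻¹' {u}) = ENNReal.ofReal (p u ^ 2) := by
    rw [hfg.measure_inter_preimage_eq_mul _ _ (measurableSet_singleton u)
      (measurableSet_singleton u), hf, hg, ← ENNReal.ofReal_mul (hp u), sq]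
  rw [hunion, ENNReal.ofReal_sum_of_nonneg fun u _ => sq_nonneg (p u)]
  exact (measure_iUnion_fintype_le μ _).trans_eq (Finset.sum_congr rfl fun u _ => hpair u)

lemma measure_exists_or_exists_pair_eq_le [Fintype ι] [LT ι] (X : ι → Ω → α) (P : α → Prop)
    {a b : ℝ≥0∞} (ha : ∀ i, μ {ω | P (X i ω)} ≤ a)
    (hb : ∀ i j, i < j → μ {ω | X i ω = X j ω} ≤ b) :
    μ {ω | (∃ i, P (X i ω)) ∨ ∃ i j, i < j ∧ X i ω = X j ω}
      ≤ Fintype.card ι * a + Fintype.card ι ^ 2 * b := by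
  have hunion : {ω | (∃ i, P (X i ω)) ∨ ∃ i j, i < j ∧ X i ω = X j ω}
      = (⋃ i, {ω | P (X i ω)}) ∪ ⋃ i, ⋃ j, {ω | i < j ∧ X i ω = X j ω} := by
    ext ω; simp
  have hpair (i j : ι) : μ {ω | i < j ∧ X i ω = X j ω} ≤ b := by
    by_cases hij : i < j
    · simpa [hij] using hb i j hij
    · simp [hij]
  calc μ {ω | (∃ i, P (X i ω)) ∨ ∃ i j, i < j ∧ X i ω = X j ω}
      ≤ ∑ i, μ {ω | P (X i ω)} + ∑ i, ∑ j, μ {ω | i < j ∧ X i ω = X j ω} := by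
        rw [hunion]
        refine (measure_union_le _ _).trans (add_le_add (measure_iUnion_fintype_le μ _) ?_)
        exact (measure_iUnion_fintype_le μ _).trans
          (Finset.sum_le_sum fun i _ => measure_iUnion_fintype_le μ _)
    _ ≤ ∑ _i : ι, a + ∑ _i : ι, ∑ _j : ι, b := by
        gcongr with i _ i _ j _
        exacts [ha i, hpair i j]
    _ = Fintype.card ι * a + Fintype.card ι ^ 2 * b := by
        simp only [Finset.sum_const, Finset.card_univ, nsmul_eq_mul, sq, mul_assoc]

end Draws

lemma sum_sq_le_of_le_of_sum_eq_one {α : Type*} {s : Finset α} {p : α → ℝ} {c : ℝ}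
    (hp : ∀ u ∈ s, 0 ≤ p u) (hpc : ∀ u ∈ s, p u ≤ c) (hsum : ∑ u ∈ s, p u = 1) :
    ∑ u ∈ s, p u ^ 2 ≤ c :=
  calc ∑ u ∈ s, p u ^ 2 ≤ ∑ u ∈ s, c * p u :=
        Finset.sum_le_sum fun u hu => by
          rw [sq]; exact mul_le_mul_of_nonneg_right (hpc u hu) (hp u hu)
    _ = c := by rw [← Finset.mul_sum, hsum, mul_one]

section Weights

variable {n k : ℕ} {x π : Fin n → ℝ}
  (hx : ∀ j : Fin n, x j = if (j : ℕ) < k then 1 else Real.sqrt k / n)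
  (hπ : ∀ j, π j = x j / ∑ j', x j')
include hx

lemma weight_nonneg (j : Fin n) : 0 ≤ x j := by
  rw [hx j]; split <;> positivity

lemma weight_le_one (hkn : k ≤ n) (j : Fin n) : x j ≤ 1 := by
  rw [hx j]
  split
  · exact le_rfl
  · have hsqrt : Real.sqrt k ≤ n :=
      calc Real.sqrt k ≤ Real.sqrt n := Real.sqrt_le_sqrt (by exact_mod_cast hkn)
        _ ≤ n := Real.sqrt_le_self_iff.mpr <| n.eq_zero_or_pos.imp
            (by exact_mod_cast ·) (by exact_mod_cast ·)
    exact div_le_one_of_le₀ hsqrt (Nat.cast_nonneg n)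

lemma le_sum_weights (hkn : k ≤ n) : (k : ℝ) ≤ ∑ j, x j := by
  have hhead : ∑ j ∈ {j : Fin n | (j : ℕ) < k}, x j = k := by
    rw [Finset.sum_congr rfl fun j hj => by rw [hx j, if_pos (by simpa using hj)],
      Finset.sum_const, Fin.card_filter_val_lt, min_eq_right hkn, nsmul_one]
  rw [← hhead]
  exact Finset.sum_le_sum_of_subset_of_nonneg (Finset.subset_univ _)
    fun j _ _ => weight_nonneg hx j

lemma sum_weights_pos (hk : 1 ≤ k) (hkn : k ≤ n) : 0 < ∑ j, x j :=
  (by exact_mod_cast hk : (0 : ℝ) < k).trans_le (le_sum_weights hx hkn)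

include hπ

lemma normalized_weight_nonneg (hk : 1 ≤ k) (hkn : k ≤ n) (j : Fin n) : 0 ≤ π j := by
  rw [hπ j]; exact div_nonneg (weight_nonneg hx j) (sum_weights_pos hx hk hkn).le

lemma normalized_weight_le (hk : 1 ≤ k) (hkn : k ≤ n) (j : Fin n) : π j ≤ 1 / k := by
  have hk0 : (0 : ℝ) < k := by exact_mod_cast hk
  rw [hπ j]
  calc x j / ∑ j', x j' ≤ 1 / ∑ j', x j' :=
        div_le_div_of_nonneg_right (weight_le_one hx hkn j) (sum_weights_pos hx hk hkn).le
    _ ≤ 1 / k := one_div_le_one_div_of_le hk0 (le_sum_weights hx hkn)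

lemma sum_normalized_weights (hk : 1 ≤ k) (hkn : k ≤ n) : ∑ j, π j = 1 := by
  rw [Finset.sum_congr rfl fun j _ => hπ j, ← Finset.sum_div,
    div_self (sum_weights_pos hx hk hkn).ne']

lemma sum_light_normalized_weights_le (hk : 1 ≤ k) (hkn : k ≤ n) :
    ∑ j ∈ {j : Fin n | k ≤ (j : ℕ)}, π j ≤ 1 / Real.sqrt k := by
  have hk0 : (0 : ℝ) < k := by exact_mod_cast hk
  have hn0 : (0 : ℝ) < n := by exact_mod_cast hk.trans hkn
  have hΓ := sum_weights_pos hx hk hkn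
  have hlight : ∀ j ∈ ({j : Fin n | k ≤ (j : ℕ)} : Finset (Fin n)),
      π j = Real.sqrt k / n / ∑ j', x j' := fun j hj => by
    rw [hπ j, hx j, if_neg (by simpa using hj)]
  rw [Finset.sum_congr rfl hlight, Finset.sum_const, nsmul_eq_mul]
  calc (#{j : Fin n | k ≤ (j : ℕ)} : ℝ) * (Real.sqrt k / n / ∑ j', x j')
      ≤ n * (Real.sqrt k / n / ∑ j', x j') := by
        gcongr
        exact_mod_cast (Finset.card_filter_le _ _).trans_eq (Finset.card_fin n)
    _ = Real.sqrt k / ∑ j', x j' := by field_simp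
    _ ≤ Real.sqrt k / k :=
        div_le_div_of_nonneg_left (Real.sqrt_nonneg k) hk0 (le_sum_weights hx hkn)
    _ = 1 / Real.sqrt k := by
        rw [div_eq_div_iff hk0.ne' (Real.sqrt_pos.mpr hk0).ne', one_mul,
          Real.mul_self_sqrt hk0.le]

end Weights

theorem lower_bound_indistinguishability_general
    {Ω : Type*} {mΩ : MeasurableSpace Ω} {μ : Measure Ω}
    (n k m : ℕ) (hk : 1 ≤ k) (hn : 2 * k ≤ n)
    (x : Fin n → ℝ) (hx : ∀ j : Fin n, x j = if (j : ℕ) < k then 1 else Real.sqrt k / n)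
    (π : Fin n → ℝ) (hπ : ∀ j, π j = x j / ∑ j', x j')
    (X : Fin m → Ω → Fin n)
    (hindep : iIndepFun X μ)
    (hlaw : ∀ (i : Fin m) (u : Fin n), μ (X i ⁻¹' {u}) = ENNReal.ofReal (π u)) :
    μ {ω | (∃ i : Fin m, k ≤ (X i ω : ℕ)) ∨ ∃ i j : Fin m, i < j ∧ X i ω = X j ω}
      ≤ ENNReal.ofReal ((m : ℝ) / Real.sqrt k + (m : ℝ) ^ 2 / k) := by
  have hkn : k ≤ n := by omega
  have hπ0 := normalized_weight_nonneg hx hπ hk hkn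
  have hlight (i : Fin m) : μ {ω | k ≤ (X i ω : ℕ)} ≤ ENNReal.ofReal (1 / Real.sqrt k) := by
    have := measure_preimage_finset_le_ofReal_sum (X i) hπ0 (hlaw i) {j | k ≤ (j : ℕ)}
    simp only [Finset.coe_filter, Finset.mem_univ, true_and] at this
    exact this.trans (ENNReal.ofReal_le_ofReal (sum_light_normalized_weights_le hx hπ hk hkn))
  have hcollision (i j : Fin m) (hij : i < j) :
      μ {ω | X i ω = X j ω} ≤ ENNReal.ofReal (1 / k) :=
    ((hindep.indepFun hij.ne).measure_eq_le_ofReal_sum_sq hπ0 (hlaw i) (hlaw j)).trans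
      (ENNReal.ofReal_le_ofReal (sum_sq_le_of_le_of_sum_eq_one (fun j _ => hπ0 j)
        (fun j _ => normalized_weight_le hx hπ hk hkn j) (sum_normalized_weights hx hπ hk hkn)))
  refine (measure_exists_or_exists_pair_eq_le X (fun u : Fin n => k ≤ (u : ℕ)) hlight
    hcollision).trans_eq ?_
  rw [Fintype.card_fin, ENNReal.ofReal_add (by positivity) (by positivity),
    ← ENNReal.ofReal_natCast m, ← ENNReal.ofReal_pow m.cast_nonneg,
    ← ENNReal.ofReal_mul m.cast_nonneg, ← ENNReal.ofReal_mul (by positivity),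
    mul_one_div, mul_one_div]

/-- Indistinguishability event bound in the lower-bound proof for sum estimation:
for `m` i.i.d. draws `X 1, …, X m` from `π = x / ∑ x`, where `x` has `k` entries equal to
`1` (the indices `j` with `(j : ℕ) < k`) and `n - k` entries equal to `√k/n`, the
probability that some draw lands on an index `j` with `(j : ℕ) ≥ k`, or that two draws
coincide, is at most `m/√k + m²/k`. -/
theorem lower_bound_indistinguishability
    {Ω : Type*} {mΩ : MeasurableSpace Ω} {μ : Measure Ω} [IsProbabilityMeasure μ]
    (n k m : ℕ) (hk : 1 ≤ k) (hn : 2 * k ≤ n)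
    (x : Fin n → ℝ) (hx : ∀ j : Fin n, x j = if (j : ℕ) < k then 1 else Real.sqrt k / n)
    (π : Fin n → ℝ) (hπ : ∀ j, π j = x j / ∑ j', x j')
    (X : Fin m → Ω → Fin n) (hXmeas : ∀ i, Measurable (X i))
    (hindep : iIndepFun X μ)
    (hlaw : ∀ (i : Fin m) (u : Fin n), μ (X i ⁻¹' {u}) = ENNReal.ofReal (π u)) :
    μ {ω | (∃ i : Fin m, k ≤ (X i ω : ℕ)) ∨ ∃ i j : Fin m, i < j ∧ X i ω = X j ω}
      ≤ ENNReal.ofReal ((m : ℝ) / Real.sqrt k + (m : ℝ) ^ 2 / k) :=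
  lower_bound_indistinguishability_general (mΩ := mΩ) n k m hk hn x hx π hπ X hindep hlaw
end
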